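/- arXiv:math/0504513 — 10 statements merged into one kernel-verified Lean document; each statement's English description precedes it below -/
import Mathlib

section
/- Let d ≥ 1, let W ∈ ℝ^{d×d} be symmetric positive definite and let r > 0. The function f(V) = (det V)^{-r/2} · exp(-(1/2)·tr(V^{-1}W)), defined on the set of symmetric positive definite d×d matrices V, attains its maximum value (det((1/r)W))^{-r/2} · e^{-rd/2} at V = (1/r)W, and at no other positive definite matrix. -/
/-!
Factor `W = Bᴴ B` and whiten `V` to `A = B V⁻¹ Bᴴ`, which is positive definite with
`det A = det W / det V` and `tr A = tr (V⁻¹ W)`. Then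
`log f V = -(r/2) log det W + (1/2) ∑ᵢ (r log λᵢ - λᵢ)` over the eigenvalues `λᵢ` of `A`, and
`x ↦ r log x - x` has its unique maximum at `x = r`. So `f` is maximal exactly when `A = r • 1`,
that is, when `V = r⁻¹ • W`.
-/

open Matrix Real
open scoped MatrixOrder

theorem Real.mul_log_sub_lt_of_ne {r x : ℝ} (hr : 0 < r) (hx : 0 < x) (hxr : x ≠ r) :
    r * log x - x < r * log r - r := by
  have h := log_lt_sub_one_of_pos (div_pos hx hr) (by rwa [ne_eq, div_eq_one_iff_eq hr.ne'])
  rw [log_div hx.ne' hr.ne', lt_sub_iff_add_lt, lt_div_iff₀ hr] at h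
  nlinarith

theorem Real.mul_log_sub_le {r x : ℝ} (hr : 0 < r) (hx : 0 < x) :
    r * log x - x ≤ r * log r - r := by
  rcases eq_or_ne x r with rfl | hxr
  · rfl
  · exact (mul_log_sub_lt_of_ne hr hx hxr).le

namespace Matrix

variable {n : Type*} [Fintype n] [DecidableEq n]

theorem IsHermitian.eq_smul_one_of_eigenvalues_eq {𝕜 : Type*} [RCLike 𝕜] {A : Matrix n n 𝕜}
    (hA : A.IsHermitian) {c : ℝ} (hc : ∀ i, hA.eigenvalues i = c) : A = (c : 𝕜) • 1 := by
  have hdiag : diagonal (RCLike.ofReal ∘ hA.eigenvalues) = algebraMap 𝕜 (Matrix n n 𝕜) c := by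
    rw [algebraMap_eq_diagonal]
    congr 1
    ext i
    simp [hc i]
  rw [hA.spectral_theorem, hdiag, AlgHomClass.commutes, Algebra.algebraMap_eq_smul_one]

theorem PosDef.mul_log_det_sub_trace_eq_sum {A : Matrix n n ℝ} (hA : A.PosDef) (r : ℝ) :
    r * log A.det - A.trace = ∑ i, (r * log (hA.1.eigenvalues i) - hA.1.eigenvalues i) := by
  rw [hA.1.det_eq_prod_eigenvalues, hA.1.trace_eq_sum_eigenvalues, Finset.sum_sub_distrib,
    ← Finset.mul_sum]
  simp only [RCLike.ofReal_real_eq_id, id]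
  rw [log_prod fun i _ => (hA.eigenvalues_pos i).ne']

theorem PosDef.mul_log_det_sub_trace_le {A : Matrix n n ℝ} (hA : A.PosDef) {r : ℝ} (hr : 0 < r) :
    r * log A.det - A.trace ≤ Fintype.card n * (r * log r - r) := by
  rw [hA.mul_log_det_sub_trace_eq_sum, ← nsmul_eq_mul, ← Finset.card_univ, ← Finset.sum_const]
  exact Finset.sum_le_sum fun i _ => mul_log_sub_le hr (hA.eigenvalues_pos i)

theorem PosDef.eq_smul_one_of_mul_log_det_sub_trace_eq {A : Matrix n n ℝ} (hA : A.PosDef)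
    {r : ℝ} (hr : 0 < r) (h : r * log A.det - A.trace = Fintype.card n * (r * log r - r)) :
    A = r • 1 := by
  refine hA.1.eq_smul_one_of_eigenvalues_eq fun i => ?_
  by_contra hi
  rw [hA.mul_log_det_sub_trace_eq_sum, ← nsmul_eq_mul, ← Finset.card_univ,
    ← Finset.sum_const] at h
  exact h.not_lt <| Finset.sum_lt_sum (fun j _ => mul_log_sub_le hr (hA.eigenvalues_pos j))
    ⟨i, Finset.mem_univ i, mul_log_sub_lt_of_ne hr (hA.eigenvalues_pos i) hi⟩

theorem eq_inv_smul_conjTranspose_mul_self_of_mul_inv_mul_conjTranspose_eq {K : Type*} [Field K]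
    [StarRing K] {B V : Matrix n n K} (hB : IsUnit B) (hV : IsUnit V) {r : K} (hr : r ≠ 0)
    (h : B * V⁻¹ * Bᴴ = r • 1) : V = r⁻¹ • (Bᴴ * B) := by
  have hVinv : V⁻¹ * (Bᴴ * B) = r • 1 := by
    apply hB.mul_left_cancel
    rw [← Matrix.mul_assoc, ← Matrix.mul_assoc, h, smul_mul_assoc, Matrix.one_mul,
      Matrix.mul_smul, Matrix.mul_one]
  have : Bᴴ * B = r • V := by
    rw [← Matrix.one_mul (Bᴴ * B), ← mul_nonsing_inv V ((isUnit_iff_isUnit_det V).1 hV),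
      Matrix.mul_assoc, hVinv, Matrix.mul_smul, Matrix.mul_one]
  rw [this, smul_smul, inv_mul_cancel₀ hr, one_smul]

theorem PosDef.mul_inv_mul_conjTranspose {B V : Matrix n n ℝ} (hB : IsUnit B) (hV : V.PosDef) :
    (B * V⁻¹ * Bᴴ).PosDef :=
  hV.inv.mul_mul_conjTranspose_same (vecMul_injective_iff_isUnit.2 hB)

theorem trace_inv_smul_mul_self {K : Type*} [Field K] {W : Matrix n n K} (hW : IsUnit W)
    {r : K} (hr : r ≠ 0) : ((r⁻¹ • W)⁻¹ * W).trace = r * Fintype.card n := by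
  have hinv : (r⁻¹ • W)⁻¹ = r • W⁻¹ := inv_eq_left_inv <| by
    rw [smul_mul_smul_comm, mul_inv_cancel₀ hr, one_smul,
      nonsing_inv_mul W ((isUnit_iff_isUnit_det W).1 hW)]
  rw [hinv, smul_mul_assoc, nonsing_inv_mul W ((isUnit_iff_isUnit_det W).1 hW), trace_smul,
    trace_one, smul_eq_mul]

/-- `log f V` for the likelihood `f` of the theorem, when `det V > 0`. -/
noncomputable def normalLogLik (r : ℝ) (W V : Matrix n n ℝ) : ℝ :=
  -(r / 2) * log V.det - (1 / 2) * (V⁻¹ * W).trace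

theorem normalLogLik_eq_of_conjTranspose_mul_self_eq {B V W : Matrix n n ℝ} (hBW : Bᴴ * B = W)
    (hB : IsUnit B) (hV : V.PosDef) (r : ℝ) :
    normalLogLik r W V = -(r / 2) * log W.det +
      (r * log (B * V⁻¹ * Bᴴ).det - (B * V⁻¹ * Bᴴ).trace) / 2 := by
  subst hBW
  have hdet : (Bᴴ * B).det = (B * V⁻¹ * Bᴴ).det * V.det := by
    have hVdet := det_nonsing_inv_mul_det _ (isUnit_iff_ne_zero.2 hV.det_pos.ne')
    simp only [det_mul]
    linear_combination (-(Bᴴ.det * B.det)) * hVdet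
  have htrace : (B * V⁻¹ * Bᴴ).trace = (V⁻¹ * (Bᴴ * B)).trace := by
    rw [trace_mul_cycle, trace_mul_comm]
  rw [normalLogLik, hdet, log_mul (hV.mul_inv_mul_conjTranspose hB).det_pos.ne' hV.det_pos.ne',
    htrace]
  ring

theorem normalLogLik_inv_smul_self {W : Matrix n n ℝ} (hW : W.PosDef) {r : ℝ} (hr : 0 < r) :
    normalLogLik r W (r⁻¹ • W) = -(r / 2) * log W.det + Fintype.card n * (r * log r - r) / 2 := by
  rw [normalLogLik, trace_inv_smul_mul_self hW.isUnit hr.ne', det_smul,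
    log_mul (by positivity) hW.det_pos.ne', log_pow, log_inv]
  ring

end Matrix

theorem tdc_covariance_ml_estimator_general {d : ℕ} (r : ℝ) (hr : 0 < r)
    (W : Matrix (Fin d) (Fin d) ℝ) (hW : W.PosDef)
    (f : Matrix (Fin d) (Fin d) ℝ → ℝ)
    (hf : ∀ V : Matrix (Fin d) (Fin d) ℝ,
      f V = V.det ^ (-(r / 2)) * Real.exp (-(1 / 2) * (V⁻¹ * W).trace)) :
    f (r⁻¹ • W) = ((r⁻¹ • W).det) ^ (-(r / 2)) * Real.exp (-(r * d) / 2) ∧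
    (∀ V : Matrix (Fin d) (Fin d) ℝ, V.PosDef → f V ≤ f (r⁻¹ • W)) ∧
    (∀ V : Matrix (Fin d) (Fin d) ℝ, V.PosDef → f V = f (r⁻¹ • W) → V = r⁻¹ • W) := by
  obtain ⟨B, hBW⟩ : ∃ B, W = Bᴴ * B :=
    CStarAlgebra.nonneg_iff_eq_star_mul_self.mp hW.posSemidef.nonneg
  have hB : IsUnit B := isUnit_of_mul_isUnit_right (hBW ▸ hW.isUnit)
  have hf_exp : ∀ V, V.PosDef → f V = exp (normalLogLik r W V) := fun V hV => by
    rw [hf, rpow_def_of_pos hV.det_pos, ← exp_add, normalLogLik]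
    ring_nf
  have hW₀ : (r⁻¹ • W).PosDef := hW.smul (inv_pos.2 hr)
  have hlik₀ := normalLogLik_inv_smul_self hW hr
  refine ⟨?_, fun V hV => ?_, fun V hV hfV => ?_⟩
  · rw [hf, trace_inv_smul_mul_self hW.isUnit hr.ne', Fintype.card_fin]
    ring_nf
  · rw [hf_exp V hV, hf_exp _ hW₀, exp_le_exp,
      normalLogLik_eq_of_conjTranspose_mul_self_eq hBW.symm hB hV, hlik₀]
    linarith [(PosDef.mul_inv_mul_conjTranspose hB hV).mul_log_det_sub_trace_le hr]
  · have hA := PosDef.mul_inv_mul_conjTranspose hB hV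
    have hlik := normalLogLik_eq_of_conjTranspose_mul_self_eq hBW.symm hB hV r
    rw [hf_exp V hV, hf_exp _ hW₀, exp_eq_exp, hlik, hlik₀] at hfV
    rw [hBW]
    exact eq_inv_smul_conjTranspose_mul_self_of_mul_inv_mul_conjTranspose_eq hB hV.isUnit hr.ne'
      (hA.eq_smul_one_of_mul_log_det_sub_trace_eq hr (by linarith))

/-- Let `d ≥ 1`, let `W` be a symmetric positive definite real `d × d`
matrix and let `r > 0`.  The function
`f(V) = (det V)^(-r/2) · exp(-(1/2)·tr(V⁻¹W))`, defined on positive definite matrices,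
attains its maximum value `(det((1/r)·W))^(-r/2) · e^(-r·d/2)` at `V = (1/r)·W`, and at no
other positive definite matrix. -/
theorem tdc_covariance_ml_estimator {d : ℕ} (hd : 1 ≤ d) (r : ℝ) (hr : 0 < r)
    (W : Matrix (Fin d) (Fin d) ℝ) (hW : W.PosDef)
    (f : Matrix (Fin d) (Fin d) ℝ → ℝ)
    (hf : ∀ V : Matrix (Fin d) (Fin d) ℝ,
      f V = V.det ^ (-(r / 2)) * Real.exp (-(1 / 2) * (V⁻¹ * W).trace)) :
    f (r⁻¹ • W) = ((r⁻¹ • W).det) ^ (-(r / 2)) * Real.exp (-(r * d) / 2) ∧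
    (∀ V : Matrix (Fin d) (Fin d) ℝ, V.PosDef → f V ≤ f (r⁻¹ • W)) ∧
    (∀ V : Matrix (Fin d) (Fin d) ℝ, V.PosDef → f V = f (r⁻¹ • W) → V = r⁻¹ • W) :=
  tdc_covariance_ml_estimator_general r hr W hW f hf
end

section
/- Let x_1,…,x_n ∈ ℝ^d and let R = (R_1,…,R_g) and R_new = (R_{new,1},…,R_{new,g}) be two configurations over r-element subsets R, R_new ⊆ {1,…,n} respectively, with W_R positive definite. Suppose Σ_{j=1}^g Σ_{i∈R_{new,j}} (x_i − m_R(j))^T W_R^{-1} (x_i − m_R(j)) ≤ Σ_{j=1}^g Σ_{i∈R_j} (x_i − m_R(j))^T W_R^{-1} (x_i − m_R(j)). Then (a) det W_{R_new} ≤ det W_R, with equality if and only if W_{R_new} = W_R; and (b) if the empty clusters of R_new are assigned the mean vectors m_{R_new}(j) := m_R(j), then equality of the determinants implies m_{R_new}(j) = m_R(j) for every j ∈ {1,…,g}. -/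
open Matrix Finset Real

/-- The sample mean of the points `x i`, `i ∈ S`; a fixed a-priori vector `dflt` if `S = ∅`. -/
noncomputable def clusterMean {n d : ℕ} (x : Fin n → Fin d → ℝ) (dflt : Fin d → ℝ)
    (S : Finset (Fin n)) : Fin d → ℝ :=
  if S.Nonempty then (S.card : ℝ)⁻¹ • ∑ i ∈ S, x i else dflt

/-- The pooled (within-groups) SSP matrix of the configuration `C` for the data `x`:
`W = Σ_j Σ_{i ∈ C j} (x i − m_j)(x i − m_j)ᵀ`, where `m_j` is the sample mean of cluster `j`. -/
noncomputable def pooledSSP {n d g : ℕ} (x : Fin n → Fin d → ℝ) (dflt : Fin g → Fin d → ℝ)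
    (C : Fin g → Finset (Fin n)) : Matrix (Fin d) (Fin d) ℝ :=
  ∑ j, ∑ i ∈ C j, Matrix.vecMulVec (x i - clusterMean x (dflt j) (C j))
    (x i - clusterMean x (dflt j) (C j))

/-- A configuration over an `r`-element subset of `{1,…,n}`: a family of `g` pairwise
disjoint (possibly empty) clusters whose union has exactly `r` elements. -/
def IsConfig {n g : ℕ} (r : ℕ) (C : Fin g → Finset (Fin n)) : Prop :=
  (∀ j k : Fin g, j ≠ k → Disjoint (C j) (C k)) ∧ (Finset.univ.biUnion C).card = r

/-- A family of points of `ℝ^d` is in general position if any `d+1` of them are affinely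
independent. -/
def InGeneralPosition {n d : ℕ} (x : Fin n → Fin d → ℝ) : Prop :=
  ∀ s : Finset (Fin n), s.card = d + 1 → AffineIndependent ℝ (fun i : s => x (i : Fin n))

/-!
Write `W = W_R`. Splitting each new cluster's Mahalanobis sum about its own mean (Steiner's
formula) shows that the hypothesis bounds `tr (W⁻¹ W_{R_new})` plus a nonnegative penalty for
the displaced means by `tr (W⁻¹ W) = d`. After conjugating by `√W`, the matrix
`N = W^{-1/2} W_{R_new} W^{-1/2}` is positive semidefinite with trace at most `d`, so AM–GM on
its eigenvalues gives `det W_{R_new} / det W = det N ≤ 1`, with equality only if `N = 1`. Then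
the trace bound is tight, the penalty vanishes and the means do not move.
-/

namespace Real

lemma prod_le_one_of_sum_le_card {ι : Type*} [Fintype ι] {f : ι → ℝ} (hf : ∀ i, 0 ≤ f i)
    (hsum : ∑ i, f i ≤ Fintype.card ι) :
    ∏ i, f i ≤ 1 ∧ (∏ i, f i = 1 → ∀ i, f i = 1) := by
  by_cases! hzero : ∃ i, f i = 0
  · obtain ⟨i, hi⟩ := hzero
    rw [Finset.prod_eq_zero (Finset.mem_univ i) hi]
    exact ⟨zero_le_one, fun h => absurd h zero_ne_one⟩
  have hpos : ∀ i, 0 < f i := fun i => (hf i).lt_of_ne' (hzero i)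
  have hgap : ∀ i ∈ Finset.univ, 0 ≤ f i - 1 - log (f i) := fun i _ => by
    linarith [log_le_sub_one_of_pos (hpos i)]
  have hlog : ∑ i, (f i - 1 - log (f i)) ≤ -log (∏ i, f i) := by
    rw [log_prod fun i _ => hzero i, Finset.sum_sub_distrib, Finset.sum_sub_distrib]
    simp only [Finset.sum_const, Finset.card_univ, nsmul_eq_mul, mul_one]
    linarith
  have hprod_pos : 0 < ∏ i, f i := Finset.prod_pos fun i _ => hpos i
  refine ⟨(log_nonpos_iff hprod_pos.le).mp (by linarith [Finset.sum_nonneg hgap]), fun h i => ?_⟩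
  rw [h, log_one, neg_zero] at hlog
  have hgap_i := (Finset.sum_eq_zero_iff_of_nonneg hgap).mp
    (hlog.antisymm (Finset.sum_nonneg hgap)) i (Finset.mem_univ i)
  by_contra hne
  linarith [log_lt_sub_one_of_pos (hpos i) hne]

end Real

namespace Matrix

variable {n : Type*} [Fintype n] [DecidableEq n]

lemma IsHermitian.eq_one_of_eigenvalues_eq_one {N : Matrix n n ℝ} (hN : N.IsHermitian)
    (h : ∀ i, hN.eigenvalues i = 1) : N = 1 := by
  have hdiag : RCLike.ofReal ∘ hN.eigenvalues = fun _ : n => (1 : ℝ) := by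
    funext i
    simp [h i]
  rw [hN.spectral_theorem, hdiag, Unitary.conjStarAlgAut_apply, diagonal_one, Matrix.mul_one]
  exact (mem_unitaryGroup_iff).mp hN.eigenvectorUnitary.2

lemma PosSemidef.det_le_one_of_trace_le {N : Matrix n n ℝ} (hN : N.PosSemidef)
    (htr : N.trace ≤ Fintype.card n) : N.det ≤ 1 ∧ (N.det = 1 → N = 1) := by
  have hdet : N.det = ∏ i, hN.1.eigenvalues i := by simpa using hN.1.det_eq_prod_eigenvalues
  have hsum : ∑ i, hN.1.eigenvalues i ≤ Fintype.card n := by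
    simpa [hN.1.trace_eq_sum_eigenvalues] using htr
  obtain ⟨hle, heq⟩ := Real.prod_le_one_of_sum_le_card hN.eigenvalues_nonneg hsum
  rw [hdet]
  exact ⟨hle, fun h => hN.1.eq_one_of_eigenvalues_eq_one (heq h)⟩

open scoped MatrixOrder in
/-- Conjugating by `√W` reduces this to the case `W = 1`. -/
lemma PosDef.det_le_det_of_trace_inv_mul_le {W V : Matrix n n ℝ} (hW : W.PosDef)
    (hV : V.PosSemidef) (htr : (W⁻¹ * V).trace ≤ Fintype.card n) :
    V.det ≤ W.det ∧ (V.det = W.det → V = W) := by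
  obtain ⟨S, hS, hSS⟩ : ∃ S : Matrix n n ℝ, S.IsHermitian ∧ S * S = W :=
    ⟨CFC.sqrt W, (nonneg_iff_posSemidef.mp (CFC.sqrt_nonneg W)).1,
      CFC.sqrt_mul_sqrt_self W (nonneg_iff_posSemidef.mpr hW.posSemidef)⟩
  have hSdet : IsUnit S.det := by
    refine isUnit_iff_ne_zero.mpr fun h => hW.det_pos.ne' ?_
    rw [← hSS, det_mul, h, zero_mul]
  set N := S⁻¹ * V * S⁻¹ with hNdef
  clear_value N
  have hN : N.PosSemidef := by
    have := hV.mul_mul_conjTranspose_same S⁻¹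
    rwa [hS.inv.eq, ← hNdef] at this
  have hNtr : N.trace = (W⁻¹ * V).trace := by
    rw [hNdef, trace_mul_cycle, ← hSS, Matrix.mul_inv_rev, Matrix.mul_assoc]
  have hVN : V = S * N * S := by
    rw [hNdef, ← Matrix.mul_assoc, ← Matrix.mul_assoc, mul_nonsing_inv S hSdet, Matrix.one_mul,
      Matrix.mul_assoc, nonsing_inv_mul S hSdet, Matrix.mul_one]
  have hdet : V.det = N.det * W.det := by
    conv_lhs => rw [hVN]
    rw [det_mul, det_mul, ← hSS, det_mul]
    ring
  obtain ⟨hle, heq⟩ := hN.det_le_one_of_trace_le (hNtr ▸ htr)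
  refine ⟨hdet ▸ mul_le_of_le_one_left hW.det_pos.le hle, fun h => ?_⟩
  have hN1 : N.det = 1 := by
    rw [h] at hdet
    exact (mul_eq_right₀ hW.det_pos.ne').mp hdet.symm
  rw [hVN, heq hN1, Matrix.mul_one, hSS]

omit [DecidableEq n] in
lemma dotProduct_mulVec_self_eq_trace (M : Matrix n n ℝ) (v : n → ℝ) :
    v ⬝ᵥ (M *ᵥ v) = (M * vecMulVec v v).trace := by
  rw [mul_vecMulVec, trace_vecMulVec, dotProduct_comm]

omit [DecidableEq n] in
/-- Steiner's formula. -/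
lemma sum_dotProduct_mulVec_sub_eq {ι : Type*} (M : Matrix n n ℝ) (x : ι → n → ℝ)
    (s : Finset ι) (μ a : n → ℝ) (hμ : ∑ i ∈ s, (x i - μ) = 0) :
    ∑ i ∈ s, (x i - a) ⬝ᵥ (M *ᵥ (x i - a)) =
      ∑ i ∈ s, (x i - μ) ⬝ᵥ (M *ᵥ (x i - μ)) + s.card * ((μ - a) ⬝ᵥ (M *ᵥ (μ - a))) := by
  have hexpand : ∀ i, (x i - a) ⬝ᵥ (M *ᵥ (x i - a)) =
      (x i - μ) ⬝ᵥ (M *ᵥ (x i - μ)) + (μ - a) ⬝ᵥ (M *ᵥ (μ - a))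
        + ((x i - μ) ⬝ᵥ (M *ᵥ (μ - a)) + ((μ - a) ᵥ* M) ⬝ᵥ (x i - μ)) := fun i => by
    rw [← dotProduct_mulVec, show x i - a = (x i - μ) + (μ - a) by abel, mulVec_add,
      add_dotProduct, dotProduct_add, dotProduct_add]
    ring
  have hcross : ∑ i ∈ s, ((x i - μ) ⬝ᵥ (M *ᵥ (μ - a)) + ((μ - a) ᵥ* M) ⬝ᵥ (x i - μ)) = 0 := by
    rw [Finset.sum_add_distrib, ← sum_dotProduct, ← dotProduct_sum, hμ, zero_dotProduct,
      dotProduct_zero, add_zero]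
  rw [Finset.sum_congr rfl fun i _ => hexpand i, Finset.sum_add_distrib, hcross, add_zero,
    Finset.sum_add_distrib, Finset.sum_const, nsmul_eq_mul]

end Matrix

section Clusters

variable {n d g : ℕ}

lemma clusterMean_empty (x : Fin n → Fin d → ℝ) (a : Fin d → ℝ) : clusterMean x a ∅ = a := by
  simp [clusterMean]

lemma sum_sub_clusterMean (x : Fin n → Fin d → ℝ) (a : Fin d → ℝ) (S : Finset (Fin n)) :
    ∑ i ∈ S, (x i - clusterMean x a S) = 0 := by
  rcases S.eq_empty_or_nonempty with rfl | hS
  · rfl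
  have hcard : (S.card : ℝ) ≠ 0 := Nat.cast_ne_zero.mpr hS.card_ne_zero
  rw [Finset.sum_sub_distrib, Finset.sum_const, clusterMean, if_pos hS, ← Nat.cast_smul_eq_nsmul ℝ,
    smul_smul, mul_inv_cancel₀ hcard, one_smul, sub_self]

lemma clusterMean_eq_of_card_mul_dotProduct_eq_zero {M : Matrix (Fin d) (Fin d) ℝ}
    (hM : M.PosDef) (x : Fin n → Fin d → ℝ) (a : Fin d → ℝ) (S : Finset (Fin n))
    (h : S.card * ((clusterMean x a S - a) ⬝ᵥ (M *ᵥ (clusterMean x a S - a))) = 0) :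
    clusterMean x a S = a := by
  rcases mul_eq_zero.mp h with hcard | hq
  · rw [Finset.card_eq_zero.mp (Nat.cast_eq_zero.mp hcard), clusterMean_empty]
  · by_contra hne
    exact (hM.dotProduct_mulVec_pos (sub_ne_zero.mpr hne)).ne' hq

lemma pooledSSP_posSemidef (x : Fin n → Fin d → ℝ) (c : Fin g → Fin d → ℝ)
    (C : Fin g → Finset (Fin n)) : (pooledSSP x c C).PosSemidef :=
  posSemidef_sum _ fun j _ => posSemidef_sum _ fun i _ => by
    simpa using posSemidef_vecMulVec_self_star (x i - clusterMean x (c j) (C j))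

lemma trace_mul_pooledSSP (M : Matrix (Fin d) (Fin d) ℝ) (x : Fin n → Fin d → ℝ)
    (c : Fin g → Fin d → ℝ) (C : Fin g → Finset (Fin n)) :
    (M * pooledSSP x c C).trace =
      ∑ j, ∑ i ∈ C j, (x i - clusterMean x (c j) (C j)) ⬝ᵥ
        (M *ᵥ (x i - clusterMean x (c j) (C j))) := by
  simp only [pooledSSP, Matrix.mul_sum, trace_sum, dotProduct_mulVec_self_eq_trace]

lemma sum_dotProduct_mulVec_sub_eq_trace_mul_pooledSSP_add (M : Matrix (Fin d) (Fin d) ℝ)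
    (x : Fin n → Fin d → ℝ) (c : Fin g → Fin d → ℝ) (C : Fin g → Finset (Fin n)) :
    ∑ j, ∑ i ∈ C j, (x i - c j) ⬝ᵥ (M *ᵥ (x i - c j)) =
      (M * pooledSSP x c C).trace + ∑ j, (C j).card *
        ((clusterMean x (c j) (C j) - c j) ⬝ᵥ (M *ᵥ (clusterMean x (c j) (C j) - c j))) := by
  rw [trace_mul_pooledSSP, ← Finset.sum_add_distrib]
  exact Finset.sum_congr rfl fun j _ =>
    sum_dotProduct_mulVec_sub_eq M x (C j) _ (c j) (sum_sub_clusterMean x (c j) (C j))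

end Clusters

theorem tdc_reduction_step_general {n d g : ℕ}
    (x : Fin n → Fin d → ℝ) (dflt : Fin g → Fin d → ℝ)
    (C Cnew : Fin g → Finset (Fin n))
    (hW : (pooledSSP x dflt C).PosDef)
    (m : Fin g → Fin d → ℝ) (hm : ∀ j, m j = clusterMean x (dflt j) (C j))
    (h9 : ∑ j, ∑ i ∈ Cnew j, (x i - m j) ⬝ᵥ ((pooledSSP x dflt C)⁻¹ *ᵥ (x i - m j)) ≤
          ∑ j, ∑ i ∈ C j, (x i - m j) ⬝ᵥ ((pooledSSP x dflt C)⁻¹ *ᵥ (x i - m j))) :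
    (pooledSSP x m Cnew).det ≤ (pooledSSP x dflt C).det ∧
    ((pooledSSP x m Cnew).det = (pooledSSP x dflt C).det ↔
      pooledSSP x m Cnew = pooledSSP x dflt C) ∧
    ((pooledSSP x m Cnew).det = (pooledSSP x dflt C).det →
      ∀ j, clusterMean x (m j) (Cnew j) = m j) := by
  set W := pooledSSP x dflt C
  have htrace_self : (W⁻¹ * W).trace = d := by
    simp [nonsing_inv_mul W (isUnit_iff_ne_zero.mpr hW.det_pos.ne')]
  have hRHS : ∑ j, ∑ i ∈ C j, (x i - m j) ⬝ᵥ (W⁻¹ *ᵥ (x i - m j)) = d := by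
    simp only [hm, ← trace_mul_pooledSSP]
    exact htrace_self
  set δ : Fin g → ℝ := fun j => (Cnew j).card *
    ((clusterMean x (m j) (Cnew j) - m j) ⬝ᵥ (W⁻¹ *ᵥ (clusterMean x (m j) (Cnew j) - m j)))
  have hδ_nonneg : ∀ j ∈ Finset.univ, 0 ≤ δ j := fun j _ => mul_nonneg (Nat.cast_nonneg _)
    (by simpa only [star_trivial] using hW.inv.posSemidef.dotProduct_mulVec_nonneg _)
  have hbound : (W⁻¹ * pooledSSP x m Cnew).trace + ∑ j, δ j ≤ d :=
    calc _ = ∑ j, ∑ i ∈ Cnew j, (x i - m j) ⬝ᵥ (W⁻¹ *ᵥ (x i - m j)) :=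
          (sum_dotProduct_mulVec_sub_eq_trace_mul_pooledSSP_add W⁻¹ x m Cnew).symm
      _ ≤ _ := h9
      _ = d := hRHS
  obtain ⟨hle, heq⟩ := hW.det_le_det_of_trace_inv_mul_le (pooledSSP_posSemidef x m Cnew)
    (by simpa using (le_add_of_nonneg_right (Finset.sum_nonneg hδ_nonneg)).trans hbound)
  refine ⟨hle, ⟨heq, fun h => h ▸ rfl⟩, fun hdet j => ?_⟩
  have hδ_zero : ∑ j, δ j = 0 := by
    rw [heq hdet, htrace_self] at hbound
    exact le_antisymm (by linarith) (Finset.sum_nonneg hδ_nonneg)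
  exact clusterMean_eq_of_card_mul_dotProduct_eq_zero hW.inv x (m j) (Cnew j)
    ((Finset.sum_eq_zero_iff_of_nonneg hδ_nonneg).mp hδ_zero j (Finset.mem_univ j))

/-- Theorem 3.1 of the paper.  If the configuration `Cnew` has a smaller
total squared Mahalanobis distance (w.r.t. `W_R` and the means of `R`) than `R` itself,
then `det W_{R_new} ≤ det W_R`, with equality iff `W_{R_new} = W_R`; and (assigning the
old means to the empty new clusters) equality of the determinants forces equality of all
the mean vectors. -/
theorem tdc_reduction_step {n d g r : ℕ}
    (x : Fin n → Fin d → ℝ) (dflt : Fin g → Fin d → ℝ)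
    (C Cnew : Fin g → Finset (Fin n)) (hC : IsConfig r C) (hCnew : IsConfig r Cnew)
    (hW : (pooledSSP x dflt C).PosDef)
    (m : Fin g → Fin d → ℝ) (hm : ∀ j, m j = clusterMean x (dflt j) (C j))
    (h9 : ∑ j, ∑ i ∈ Cnew j, (x i - m j) ⬝ᵥ ((pooledSSP x dflt C)⁻¹ *ᵥ (x i - m j)) ≤
          ∑ j, ∑ i ∈ C j, (x i - m j) ⬝ᵥ ((pooledSSP x dflt C)⁻¹ *ᵥ (x i - m j))) :
    (pooledSSP x m Cnew).det ≤ (pooledSSP x dflt C).det ∧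
    ((pooledSSP x m Cnew).det = (pooledSSP x dflt C).det ↔
      pooledSSP x m Cnew = pooledSSP x dflt C) ∧
    ((pooledSSP x m Cnew).det = (pooledSSP x dflt C).det →
      ∀ j, clusterMean x (m j) (Cnew j) = m j) :=
  tdc_reduction_step_general x dflt C Cnew hW m hm h9
end

section
/- Let x_1,…,x_n ∈ ℝ^d and let R = (R_1,…,R_g) be a configuration over an r-element subset of {1,…,n} with W_R positive definite; write d_R(i,j)² = (x_i − m_R(j))^T W_R^{-1} (x_i − m_R(j)) and D_i = min_{1≤j≤g} d_R(i,j)². Let R_new ⊆ {1,…,n} be an r-element set with max_{i∈R_new} D_i ≤ min_{i∉R_new} D_i, and let R_new be the configuration obtained by assigning each i ∈ R_new to some cluster j_i minimizing d_R(i,j)² over j ∈ {1,…,g}. Then R_new minimizes the objective Σ_{j=1}^g Σ_{i∈P_j} d_R(i,j)² over all configurations (P_1,…,P_g) of all r-element subsets P ⊆ {1,…,n}; in particular, its value equals the sum of the r smallest numbers among D_1,…,D_n. -/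
open Matrix Finset Real

/-- Corollary 3.1(a) of the paper.  Let `dsq i j` be the squared
Mahalanobis distances w.r.t. a configuration `C` with positive definite pooled SSP matrix,
and let `D i = min_j dsq i j`.  If `Rnew` consists of `r` observations with the smallest
distances to their optimal clusters, and `Cnew` assigns each `i ∈ Rnew` to an optimal
cluster `ji i`, then `Cnew` minimizes `Σ_j Σ_{i ∈ P_j} dsq i j` over all configurations
over `r`-element subsets; its value is the sum of the `r` smallest among `D_1,…,D_n`. -/
theorem minimal_distance_trimmed_partition {n d g r : ℕ} (hg : 0 < g)
    (x : Fin n → Fin d → ℝ) (dflt : Fin g → Fin d → ℝ)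
    (C : Fin g → Finset (Fin n)) (hC : IsConfig r C)
    (hW : (pooledSSP x dflt C).PosDef)
    (dsq : Fin n → Fin g → ℝ)
    (hdsq : ∀ i j, dsq i j = (x i - clusterMean x (dflt j) (C j)) ⬝ᵥ
        ((pooledSSP x dflt C)⁻¹ *ᵥ (x i - clusterMean x (dflt j) (C j))))
    (Rnew : Finset (Fin n)) (hRnewcard : Rnew.card = r)
    (hsel : ∀ i ∈ Rnew, ∀ i' ∉ Rnew, (⨅ j, dsq i j) ≤ ⨅ j, dsq i' j)
    (ji : Fin n → Fin g) (hji : ∀ i j, dsq i (ji i) ≤ dsq i j)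
    (Cnew : Fin g → Finset (Fin n))
    (hCnew : ∀ j, Cnew j = Rnew.filter (fun i => ji i = j)) :
    (∀ P : Fin g → Finset (Fin n), IsConfig r P →
      ∑ j, ∑ i ∈ Cnew j, dsq i j ≤ ∑ j, ∑ i ∈ P j, dsq i j) ∧
    (∑ j, ∑ i ∈ Cnew j, dsq i j = ∑ i ∈ Rnew, ⨅ j, dsq i j) ∧
    (∀ T : Finset (Fin n), T.card = r →
      ∑ i ∈ Rnew, ⨅ j, dsq i j ≤ ∑ i ∈ T, ⨅ j, dsq i j) := by
  haveI : Nonempty (Fin g) := ⟨⟨0, hg⟩⟩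
  have hD : ∀ i, (⨅ j, dsq i j) = dsq i (ji i) := by
    intro i
    apply le_antisymm
    · exact ciInf_le (Set.finite_range _).bddBelow _
    · exact le_ciInf (hji i)
  -- value of Cnew
  have hval : ∑ j, ∑ i ∈ Cnew j, dsq i j = ∑ i ∈ Rnew, ⨅ j, dsq i j := by
    have : ∑ j, ∑ i ∈ Cnew j, dsq i j = ∑ j, ∑ i ∈ Rnew.filter (fun i => ji i = j), dsq i (ji i) := by
      apply Finset.sum_congr rfl
      intro j _
      rw [hCnew j]
      apply Finset.sum_congr rfl
      intro i hi
      rw [(Finset.mem_filter.mp hi).2]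
    rw [this, Finset.sum_fiberwise]
    exact Finset.sum_congr rfl fun i _ => (hD i).symm
  -- third part
  have hthird : ∀ T : Finset (Fin n), T.card = r →
      ∑ i ∈ Rnew, ⨅ j, dsq i j ≤ ∑ i ∈ T, ⨅ j, dsq i j := by
    intro T hT
    set D : Fin n → ℝ := fun i => ⨅ j, dsq i j with hDdef
    have hcard : (Rnew \ T).card = (T \ Rnew).card := by
      have h1 := Finset.card_sdiff_add_card_inter Rnew T
      have h2 := Finset.card_sdiff_add_card_inter T Rnew
      rw [Finset.inter_comm] at h2
      omega
    have key : ∑ i ∈ Rnew \ T, D i ≤ ∑ i ∈ T \ Rnew, D i := by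
      have e := Finset.equivOfCardEq hcard
      calc ∑ i ∈ Rnew \ T, D i = ∑ i : (Rnew \ T : Finset (Fin n)), D i :=
            (Finset.sum_coe_sort _ _).symm
        _ ≤ ∑ i : (Rnew \ T : Finset (Fin n)), D (e i : Fin n) := by
            apply Finset.sum_le_sum
            intro i _
            have hi : (i : Fin n) ∈ Rnew := (Finset.mem_sdiff.mp i.2).1
            have hi' : ((e i : Fin n)) ∉ Rnew := (Finset.mem_sdiff.mp (e i).2).2
            exact hsel _ hi _ hi'
        _ = ∑ b : (T \ Rnew : Finset (Fin n)), D (b : Fin n) := Equiv.sum_comp e (fun b => D (b : Fin n))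
        _ = ∑ i ∈ T \ Rnew, D i := Finset.sum_coe_sort _ _
    have h1 : ∑ i ∈ Rnew ∩ T, D i + ∑ i ∈ Rnew \ T, D i = ∑ i ∈ Rnew, D i :=
      Finset.sum_inter_add_sum_sdiff _ _ _
    have h2 : ∑ i ∈ T ∩ Rnew, D i + ∑ i ∈ T \ Rnew, D i = ∑ i ∈ T, D i :=
      Finset.sum_inter_add_sum_sdiff _ _ _
    rw [Finset.inter_comm] at h2
    linarith
  refine ⟨?_, hval, hthird⟩
  intro P hP
  rw [hval]
  have hPsum : ∑ i ∈ Finset.univ.biUnion P, (⨅ j, dsq i j) ≤ ∑ j, ∑ i ∈ P j, dsq i j := by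
    rw [Finset.sum_biUnion]
    · apply Finset.sum_le_sum
      intro j _
      apply Finset.sum_le_sum
      intro i _
      exact (hD i).trans_le (hji i j)
    · intro a _ b _ hab
      exact hP.1 a b hab
  exact le_trans (hthird _ hP.2) hPsum
end

section
/- Let x_1,…,x_n ∈ ℝ^d and suppose every configuration over an r-element subset of {1,…,n} has positive definite pooled SSP matrix. Let R = (R_1,…,R_g) minimize det W_R over all configurations over r-element subsets of {1,…,n}, and let j ≠ l be indices of two nonempty clusters. Define the linear form h_{jl}(y) = 2·(y − (m_R(j)+m_R(l))/2)^T W_R^{-1} (m_R(j) − m_R(l)). Then h_{jl}(x_i) ≥ 0 for every i ∈ R_j and h_{jl}(x_i) ≤ 0 for every i ∈ R_l; that is, the clusters R_j and R_l are separated by the hyperplane {y : h_{jl}(y) = 0}. -/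
open Matrix Finset Real

/-!
Moving a point `x i` from its cluster `j` to another nonempty cluster `l` changes the pooled
SSP matrix by a rank-two update `W ↦ W + β b bᵀ - α a aᵀ`, where `a = x i - m_j`,
`b = x i - m_l`, `α = k_j / (k_j - 1) ≥ 1` and `β = k_l / (k_l + 1) ≤ 1`. By the matrix
determinant lemma and Cauchy–Schwarz in the inner product `W⁻¹`, optimality of `det W` forces
`α aᵀW⁻¹a ≤ β bᵀW⁻¹b` (if `k_j = 1` the point cannot move, but then `a = 0`), so `x i` is at
least as close to `m_j` as to `m_l` in the Mahalanobis distance of `W`. The difference of these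
two squared distances is exactly `h (x i)`.
-/

section MatrixLemmas
variable {m R : Type*}

theorem Matrix.IsSymm.dotProduct_mulVec_comm [Fintype m] [CommSemiring R] {M : Matrix m m R}
    (hM : M.IsSymm) (a b : m → R) : a ⬝ᵥ M *ᵥ b = b ⬝ᵥ M *ᵥ a := by
  rw [dotProduct_mulVec, ← mulVec_transpose, hM.eq, dotProduct_comm]

theorem Matrix.PosSemidef.isSymm {M : Matrix m m ℝ} (hM : M.PosSemidef) : M.IsSymm := by
  show Mᵀ = M
  simpa using hM.isHermitian.eq

theorem Matrix.PosSemidef.dotProduct_mulVec_sq_le [Fintype m] {M : Matrix m m ℝ}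
    (hM : M.PosSemidef) (a b : m → ℝ) : (a ⬝ᵥ M *ᵥ b) ^ 2 ≤ (a ⬝ᵥ M *ᵥ a) * (b ⬝ᵥ M *ᵥ b) := by
  have hq : ∀ t : ℝ,
      0 ≤ (b ⬝ᵥ M *ᵥ b) * (t * t) + (2 * (a ⬝ᵥ M *ᵥ b)) * t + (a ⬝ᵥ M *ᵥ a) := by
    intro t
    have := hM.dotProduct_mulVec_nonneg (a + t • b)
    simp only [mulVec_add, mulVec_smul, add_dotProduct, dotProduct_add, smul_dotProduct,
      dotProduct_smul, smul_eq_mul, star_trivial, hM.isSymm.dotProduct_mulVec_comm b a] at this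
    linarith
  have := discrim_le_zero hq
  rw [discrim] at this
  nlinarith

theorem Matrix.det_add_smul_vecMulVec_sub_smul_vecMulVec [Fintype m] [DecidableEq m] [CommRing R]
    {W : Matrix m m R} (hW : IsUnit W.det) (a b : m → R) (α β : R) :
    (W + β • vecMulVec b b - α • vecMulVec a a).det
      = W.det * ((1 + β * (b ⬝ᵥ W⁻¹ *ᵥ b)) * (1 - α * (a ⬝ᵥ W⁻¹ *ᵥ a))
          + α * β * ((b ⬝ᵥ W⁻¹ *ᵥ a) * (a ⬝ᵥ W⁻¹ *ᵥ b))) := by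
  set U : Matrix m (Fin 2) R := of fun k t => ![b, a] t k
  set V : Matrix (Fin 2) m R := of ![β • b, -(α • a)]
  have hUV : W + β • vecMulVec b b - α • vecMulVec a a = W + U * V := by
    ext p q
    simp only [U, V, Matrix.add_apply, Matrix.sub_apply, Matrix.smul_apply, Matrix.mul_apply,
      vecMulVec_apply, of_apply, Fin.sum_univ_two, cons_val_zero, cons_val_one, Pi.smul_apply,
      Pi.neg_apply, smul_eq_mul]
    ring
  have hentry : ∀ s t, (V * W⁻¹ * U) s t = ![β • b, -(α • a)] s ⬝ᵥ W⁻¹ *ᵥ ![b, a] t := by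
    intro s t
    rw [Matrix.mul_assoc]
    rfl
  rw [hUV, det_add_mul _ _ hW, det_fin_two]
  simp only [Matrix.add_apply, hentry, one_apply_eq, one_apply_ne zero_ne_one,
    one_apply_ne one_ne_zero, cons_val_zero, cons_val_one, smul_dotProduct, neg_dotProduct,
    smul_eq_mul]
  ring

theorem Matrix.IsSymm.two_mul_sub_midpoint_dotProduct_mulVec [Fintype m] [Field R] [CharZero R]
    {M : Matrix m m R} (hM : M.IsSymm) (y p q : m → R) :
    2 * ((y - (2 : R)⁻¹ • (p + q)) ⬝ᵥ (M *ᵥ (p - q)))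
      = (y - q) ⬝ᵥ M *ᵥ (y - q) - (y - p) ⬝ᵥ M *ᵥ (y - p) := by
  have hmid : y - (2 : R)⁻¹ • (p + q) = (2 : R)⁻¹ • ((y - p) + (y - q)) := by module
  have hdiff : p - q = (y - q) - (y - p) := by abel
  rw [hmid, hdiff, smul_dotProduct, mulVec_sub, add_dotProduct, dotProduct_sub, dotProduct_sub,
    hM.dotProduct_mulVec_comm (y - p) (y - q), smul_eq_mul]
  field_simp
  ring

end MatrixLemmas

theorem le_of_one_le_rank_two_det_ratio {A B c α β : ℝ} (hA : 0 ≤ A) (hB : 0 ≤ B)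
    (hα : 1 ≤ α) (hβ₀ : 0 ≤ β) (hβ₁ : β ≤ 1) (hc : c ^ 2 ≤ A * B)
    (h : 1 ≤ (1 + β * B) * (1 - α * A) + α * β * c ^ 2) : A ≤ B := by
  have hαβ : α * A ≤ β * B := by nlinarith [mul_nonneg (by linarith : (0 : ℝ) ≤ α) hβ₀]
  nlinarith

section Scatter
variable {n d : ℕ} (x : Fin n → Fin d → ℝ) (dflt : Fin d → ℝ)

theorem clusterMean_apply {S : Finset (Fin n)} (hS : S.Nonempty) (t : Fin d) :
    clusterMean x dflt S t = (#S : ℝ)⁻¹ * ∑ i ∈ S, x i t := by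
  simp [clusterMean, hS, Finset.sum_apply]

noncomputable def scatter (S : Finset (Fin n)) : Matrix (Fin d) (Fin d) ℝ :=
  ∑ i ∈ S, vecMulVec (x i - clusterMean x dflt S) (x i - clusterMean x dflt S)

theorem scatter_apply (S : Finset (Fin n)) (p q : Fin d) :
    scatter x dflt S p q
      = ∑ i ∈ S, x i p * x i q - (#S : ℝ)⁻¹ * ((∑ i ∈ S, x i p) * ∑ i ∈ S, x i q) := by
  rcases S.eq_empty_or_nonempty with rfl | hS
  · simp [scatter]
  have hk : (#S : ℝ) ≠ 0 := by exact_mod_cast hS.card_pos.ne'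
  simp only [scatter, Matrix.sum_apply, vecMulVec_apply, Pi.sub_apply,
    clusterMean_apply x dflt hS]
  simp only [sub_mul, mul_sub, sum_sub_distrib, ← sum_mul, ← mul_sum, sum_const, nsmul_eq_mul]
  field_simp
  ring

theorem scatter_insert {S : Finset (Fin n)} (hS : S.Nonempty) {i : Fin n} (hi : i ∉ S) :
    scatter x dflt (insert i S) = scatter x dflt S
      + ((#S : ℝ) / (#S + 1)) •
          vecMulVec (x i - clusterMean x dflt S) (x i - clusterMean x dflt S) := by
  have hk : (#S : ℝ) ≠ 0 := by exact_mod_cast hS.card_pos.ne'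
  have hk1 : (#S : ℝ) + 1 ≠ 0 := by positivity
  ext p q
  simp only [Matrix.add_apply, Matrix.smul_apply, scatter_apply, card_insert_of_notMem hi,
    sum_insert hi, vecMulVec_apply, Pi.sub_apply, clusterMean_apply x dflt hS, smul_eq_mul,
    Nat.cast_add, Nat.cast_one]
  field_simp
  ring

theorem scatter_erase {S : Finset (Fin n)} {i : Fin n} (hi : i ∈ S) (hS : 2 ≤ #S) :
    scatter x dflt (S.erase i) = scatter x dflt S
      - ((#S : ℝ) / (#S - 1)) •
          vecMulVec (x i - clusterMean x dflt S) (x i - clusterMean x dflt S) := by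
  have hk : (2 : ℝ) ≤ #S := by exact_mod_cast hS
  have hk0 : (#S : ℝ) ≠ 0 := by positivity
  have hk1 : (#S : ℝ) - 1 ≠ 0 := by linarith
  ext p q
  simp only [Matrix.sub_apply, Matrix.smul_apply, scatter_apply, card_erase_of_mem hi,
    Nat.cast_sub (one_le_two.trans hS), sum_erase_eq_sub hi, vecMulVec_apply, Pi.sub_apply,
    clusterMean_apply x dflt ⟨i, hi⟩, smul_eq_mul, Nat.cast_one]
  field_simp
  ring

end Scatter

section Move
variable {n d g : ℕ}

def moveTo (C : Fin g → Finset (Fin n)) (i : Fin n) (l : Fin g) : Fin g → Finset (Fin n) :=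
  fun k => if k = l then insert i (C k) else (C k).erase i

theorem moveTo_self (C : Fin g → Finset (Fin n)) (i : Fin n) (l : Fin g) :
    moveTo C i l l = insert i (C l) := if_pos rfl

theorem moveTo_of_ne {C : Fin g → Finset (Fin n)} {i : Fin n} {k l : Fin g} (hkl : k ≠ l) :
    moveTo C i l k = (C k).erase i := if_neg hkl

theorem isConfig_moveTo {r : ℕ} {C : Fin g → Finset (Fin n)} (hC : IsConfig r C) {i : Fin n}
    {j : Fin g} (hi : i ∈ C j) (l : Fin g) : IsConfig r (moveTo C i l) := by
  obtain ⟨hdisj, hcard⟩ := hC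
  have hdisj_self : ∀ k, k ≠ l → Disjoint (moveTo C i l l) (moveTo C i l k) := fun k hkl => by
    rw [moveTo_self, moveTo_of_ne hkl, disjoint_insert_left]
    exact ⟨notMem_erase i _, (hdisj l k hkl.symm).mono_right (erase_subset _ _)⟩
  refine ⟨fun a b hab => ?_, ?_⟩
  · by_cases hal : a = l
    · subst hal
      exact hdisj_self b hab.symm
    by_cases hbl : b = l
    · subst hbl
      exact (hdisj_self a hab).symm
    rw [moveTo_of_ne hal, moveTo_of_ne hbl]
    exact (hdisj a b hab).mono (erase_subset _ _) (erase_subset _ _)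
  · rw [← hcard]
    congr 1
    ext y
    simp only [mem_biUnion, mem_univ, true_and]
    by_cases hy : y = i
    · subst hy
      exact ⟨fun _ => ⟨j, hi⟩, fun _ => ⟨l, by simp [moveTo_self]⟩⟩
    · have hmem : ∀ k, y ∈ moveTo C i l k ↔ y ∈ C k := fun k => by
        unfold moveTo; split_ifs <;> simp [hy]
      simp only [hmem]

variable (x : Fin n → Fin d → ℝ) (dflt : Fin g → Fin d → ℝ)

theorem pooledSSP_eq_sum_scatter (C : Fin g → Finset (Fin n)) :
    pooledSSP x dflt C = ∑ k, scatter x (dflt k) (C k) := rfl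

theorem pooledSSP_moveTo {r : ℕ} {C : Fin g → Finset (Fin n)} (hC : IsConfig r C) {i : Fin n}
    {j l : Fin g} (hjl : j ≠ l) (hi : i ∈ C j) (hj : 2 ≤ #(C j)) (hl : (C l).Nonempty) :
    pooledSSP x dflt (moveTo C i l)
      = pooledSSP x dflt C
        + ((#(C l) : ℝ) / (#(C l) + 1)) •
            vecMulVec (x i - clusterMean x (dflt l) (C l)) (x i - clusterMean x (dflt l) (C l))
        - ((#(C j) : ℝ) / (#(C j) - 1)) •
            vecMulVec (x i - clusterMean x (dflt j) (C j))
              (x i - clusterMean x (dflt j) (C j)) := by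
  have hnotMem : ∀ k, k ≠ j → i ∉ C k := fun k hkj =>
    disjoint_left.mp (hC.1 j k hkj.symm) hi
  have hdiff : pooledSSP x dflt (moveTo C i l) - pooledSSP x dflt C
      = (scatter x (dflt j) ((C j).erase i) - scatter x (dflt j) (C j))
        + (scatter x (dflt l) (insert i (C l)) - scatter x (dflt l) (C l)) := by
    rw [pooledSSP_eq_sum_scatter, pooledSSP_eq_sum_scatter, ← sum_sub_distrib,
      Fintype.sum_eq_add j l hjl, moveTo_of_ne hjl, moveTo_self]
    rintro k ⟨hkj, hkl⟩
    rw [moveTo_of_ne hkl, erase_eq_of_notMem (hnotMem k hkj), sub_self]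
  rw [scatter_erase x _ hi hj, scatter_insert x _ hl (hnotMem l hjl.symm)] at hdiff
  rw [← sub_add_cancel (pooledSSP x dflt (moveTo C i l)) (pooledSSP x dflt C), hdiff]
  abel

end Move

theorem dotProduct_inv_mulVec_le_of_det_le {n d g r : ℕ} (x : Fin n → Fin d → ℝ)
    (dflt : Fin g → Fin d → ℝ) {C : Fin g → Finset (Fin n)} (hC : IsConfig r C)
    (hW : (pooledSSP x dflt C).PosDef)
    (hopt : ∀ P : Fin g → Finset (Fin n), IsConfig r P →
      (pooledSSP x dflt C).det ≤ (pooledSSP x dflt P).det)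
    {i : Fin n} {j l : Fin g} (hjl : j ≠ l) (hi : i ∈ C j) (hl : (C l).Nonempty) :
    (x i - clusterMean x (dflt j) (C j)) ⬝ᵥ (pooledSSP x dflt C)⁻¹ *ᵥ
        (x i - clusterMean x (dflt j) (C j))
      ≤ (x i - clusterMean x (dflt l) (C l)) ⬝ᵥ (pooledSSP x dflt C)⁻¹ *ᵥ
        (x i - clusterMean x (dflt l) (C l)) := by
  set W := pooledSSP x dflt C
  set a := x i - clusterMean x (dflt j) (C j)
  set b := x i - clusterMean x (dflt l) (C l)
  have hWinv : W⁻¹.PosSemidef := hW.inv.posSemidef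
  have hB : 0 ≤ b ⬝ᵥ W⁻¹ *ᵥ b := by simpa using hWinv.dotProduct_mulVec_nonneg b
  rcases (one_le_card.mpr ⟨i, hi⟩).eq_or_lt' with hj | hj
  · obtain ⟨z, hz⟩ := card_eq_one.mp hj
    obtain rfl : i = z := by simpa [hz] using hi
    have ha : a = 0 := by simp [a, hz, clusterMean]
    simpa [ha] using hB
  set α : ℝ := #(C j) / (#(C j) - 1)
  set β : ℝ := #(C l) / (#(C l) + 1)
  have hdet := hopt _ (isConfig_moveTo hC hi l)
  rw [pooledSSP_moveTo x dflt hC hjl hi hj hl,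
    det_add_smul_vecMulVec_sub_smul_vecMulVec hW.det_pos.ne'.isUnit a b α β,
    hWinv.isSymm.dotProduct_mulVec_comm b a, ← sq] at hdet
  have hratio := (le_mul_iff_one_le_right hW.det_pos).mp hdet
  have hA : 0 ≤ a ⬝ᵥ W⁻¹ *ᵥ a := by simpa using hWinv.dotProduct_mulVec_nonneg a
  have hkj : (2 : ℝ) ≤ #(C j) := by exact_mod_cast hj
  have hkl : (0 : ℝ) ≤ #(C l) := by positivity
  refine le_of_one_le_rank_two_det_ratio hA hB ?_ (by positivity) ?_
    (hWinv.dotProduct_mulVec_sq_le a b) hratio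
  · rw [one_le_div (by linarith)]; linarith
  · rw [div_le_one (by linarith)]; linarith

/-- Corollary 3.2(b) of the paper.  For a TDC-optimal configuration `C`
and two distinct nonempty clusters `j ≠ l`, the linear form
`h(y) = 2·(y − (m_j + m_l)/2)ᵀ W_C⁻¹ (m_j − m_l)` is nonnegative on cluster `j` and
nonpositive on cluster `l`: the two clusters are separated by the hyperplane `h = 0`. -/
theorem tdc_hyperplane_separation {n d g r : ℕ}
    (x : Fin n → Fin d → ℝ) (dflt : Fin g → Fin d → ℝ)
    (hpos : ∀ P : Fin g → Finset (Fin n), IsConfig r P → (pooledSSP x dflt P).PosDef)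
    (C : Fin g → Finset (Fin n)) (hC : IsConfig r C)
    (hopt : ∀ P : Fin g → Finset (Fin n), IsConfig r P →
      (pooledSSP x dflt C).det ≤ (pooledSSP x dflt P).det)
    (j l : Fin g) (hjl : j ≠ l) (hj : (C j).Nonempty) (hl : (C l).Nonempty)
    (h : (Fin d → ℝ) → ℝ)
    (hh : ∀ y : Fin d → ℝ, h y =
      2 * ((y - (2 : ℝ)⁻¹ • (clusterMean x (dflt j) (C j) + clusterMean x (dflt l) (C l))) ⬝ᵥ
        ((pooledSSP x dflt C)⁻¹ *ᵥ
          (clusterMean x (dflt j) (C j) - clusterMean x (dflt l) (C l))))) :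
    (∀ i ∈ C j, 0 ≤ h (x i)) ∧ (∀ i ∈ C l, h (x i) ≤ 0) := by
  have hW := hpos C hC
  have hsymm := hW.inv.posSemidef.isSymm
  refine ⟨fun i hi => ?_, fun i hi => ?_⟩
  · rw [hh, hsymm.two_mul_sub_midpoint_dotProduct_mulVec, sub_nonneg]
    exact dotProduct_inv_mulVec_le_of_det_le x dflt hC hW hopt hjl hi hl
  · rw [hh, hsymm.two_mul_sub_midpoint_dotProduct_mulVec, sub_nonpos]
    exact dotProduct_inv_mulVec_le_of_det_le x dflt hC hW hopt hjl.symm hi hj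
end

section
/- Let 2r ≥ n + g(d+1), n ≥ r, and let the data x_1,…,x_n ∈ ℝ^d be in general position. Let α > 0 be the minimum, over all (d+1)-element subsets E of {x_1,…,x_n}, of the smallest eigenvalue of the SSP matrix W_E. Then for every family y_1,…,y_n ∈ ℝ^d differing from x_1,…,x_n in at most n−r+g−1 indices, and for every configuration R over an r-element subset of {1,…,n} (for the data y_1,…,y_n), the pooled SSP matrix satisfies v^T W_R v ≥ α·||v||² for every v ∈ ℝ^d, i.e., every eigenvalue of W_R is at least α. -/
open Matrix Finset Real

/-- The SSP matrix of the sub-family `(x i)_{i ∈ E}` about its sample mean. -/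
noncomputable def sspOf {n d : ℕ} (x : Fin n → Fin d → ℝ) (E : Finset (Fin n)) :
    Matrix (Fin d) (Fin d) ℝ :=
  ∑ i ∈ E, Matrix.vecMulVec (x i - (E.card : ℝ)⁻¹ • ∑ k ∈ E, x k)
    (x i - (E.card : ℝ)⁻¹ • ∑ k ∈ E, x k)

/-!
The infimum `α` of the Rayleigh quotients of the `W_E` is attained, since over the finitely many
`(d+1)`-subsets `E` they range over a compact set, and it is positive: `d+1` affinely independent
points span `ℝ^d`, so no nonzero `v` is orthogonal to all their deviations from their mean.
For the modified data, `2r ≥ n + g(d+1)` leaves at least `gd + 1` unmodified points among the `r`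
clustered ones, so by pigeonhole some cluster contains `d+1` original points `E`. The mean of `E`
minimises the sum of squares over `E`, hence `vᵀ W_R v ≥ vᵀ W_E v ≥ α‖v‖²`.
-/

section QuadraticForm

variable {ι m : Type*} [Fintype m]

lemma dotProduct_sum_vecMulVec_self_mulVec (s : Finset ι) (w : ι → m → ℝ) (v : m → ℝ) :
    v ⬝ᵥ ((∑ i ∈ s, vecMulVec (w i) (w i)) *ᵥ v) = ∑ i ∈ s, (w i ⬝ᵥ v) ^ 2 := by
  rw [sum_mulVec, dotProduct_sum]
  refine sum_congr rfl fun i _ => ?_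
  rw [vecMulVec_mulVec, op_smul_eq_smul, dotProduct_smul, smul_eq_mul, dotProduct_comm v, sq]

lemma mul_dotProduct_self_le_dotProduct_mulVec {M : Matrix m m ℝ} {a : ℝ}
    (h : ∀ u : m → ℝ, u ⬝ᵥ u = 1 → a ≤ u ⬝ᵥ (M *ᵥ u)) (v : m → ℝ) :
    a * (v ⬝ᵥ v) ≤ v ⬝ᵥ (M *ᵥ v) := by
  rcases eq_or_ne v 0 with rfl | hv
  · simp
  have hpos : 0 < v ⬝ᵥ v := by simpa using dotProduct_self_star_pos_iff.mpr hv
  set s := √(v ⬝ᵥ v)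
  have hs : s ^ 2 = v ⬝ᵥ v := Real.sq_sqrt hpos.le
  have hs0 : s ≠ 0 := (Real.sqrt_pos.mpr hpos).ne'
  have key := h (s⁻¹ • v) (by
    rw [smul_dotProduct, dotProduct_smul, ← hs, smul_eq_mul, smul_eq_mul]
    field_simp)
  rw [mulVec_smul, smul_dotProduct, dotProduct_smul, smul_eq_mul, smul_eq_mul] at key
  calc a * (v ⬝ᵥ v) ≤ s⁻¹ * (s⁻¹ * (v ⬝ᵥ (M *ᵥ v))) * s ^ 2 := by rw [hs]; gcongr
    _ = v ⬝ᵥ (M *ᵥ v) := by field_simp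

lemma eq_zero_of_vectorSpan_eq_top_of_dotProduct_eq {p : ι → m → ℝ}
    (hp : vectorSpan ℝ (Set.range p) = ⊤) {v : m → ℝ} {c : ℝ} (hc : ∀ i, v ⬝ᵥ p i = c) :
    v = 0 := by
  have hle : vectorSpan ℝ (Set.range p) ≤ LinearMap.ker (dotProductBilin ℝ ℝ v) := by
    rw [vectorSpan_def, Submodule.span_le]
    rintro _ ⟨_, ⟨i, rfl⟩, _, ⟨j, rfl⟩, rfl⟩
    simp [dotProduct_sub, hc]
  have hvv : v ⬝ᵥ v = 0 := by simpa using hle (hp ▸ Submodule.mem_top : v ∈ _)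
  exact dotProduct_self_eq_zero.mp hvv

end QuadraticForm

lemma sum_sq_sub_mean_le {ι : Type*} (E : Finset ι) (a : ι → ℝ) (c : ℝ) :
    ∑ i ∈ E, (a i - (E.card : ℝ)⁻¹ * ∑ k ∈ E, a k) ^ 2 ≤ ∑ i ∈ E, (a i - c) ^ 2 := by
  rcases E.eq_empty_or_nonempty with rfl | hE
  · simp
  set μ := (E.card : ℝ)⁻¹ * ∑ k ∈ E, a k
  have hsum : ∑ k ∈ E, a k = E.card * μ :=
    (mul_inv_cancel_left₀ (by positivity) _).symm
  have hdiff : ∑ i ∈ E, (a i - c) ^ 2 - ∑ i ∈ E, (a i - μ) ^ 2 = E.card * (μ - c) ^ 2 := by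
    rw [← sum_sub_distrib]
    simp_rw [fun i => show (a i - c) ^ 2 - (a i - μ) ^ 2 = 2 * (μ - c) * a i + (c ^ 2 - μ ^ 2)
      by ring]
    rw [sum_add_distrib, ← mul_sum, hsum, sum_const, nsmul_eq_mul]
    ring
  linarith [mul_nonneg (Nat.cast_nonneg (α := ℝ) E.card) (sq_nonneg (μ - c))]

lemma isCompact_setOf_dotProduct_self_eq_one (m : Type*) [Fintype m] :
    IsCompact {v : m → ℝ | v ⬝ᵥ v = 1} := by
  refine (isCompact_univ_pi fun _ => isCompact_Icc (a := -1) (b := 1)).of_isClosed_subset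
    (isClosed_eq (by fun_prop) continuous_const) fun v hv i _ => ?_
  rw [Set.mem_Icc, ← abs_le, abs_le_one_iff_mul_self_le_one]
  exact hv ▸ single_le_sum (f := fun k => v k * v k) (fun k _ => mul_self_nonneg _) (mem_univ i)

section SSP

variable {n d : ℕ}

lemma dotProduct_sspOf_mulVec (x : Fin n → Fin d → ℝ) (E : Finset (Fin n)) (v : Fin d → ℝ) :
    v ⬝ᵥ (sspOf x E *ᵥ v) = ∑ i ∈ E, ((x i - (E.card : ℝ)⁻¹ • ∑ k ∈ E, x k) ⬝ᵥ v) ^ 2 :=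
  dotProduct_sum_vecMulVec_self_mulVec _ _ _

lemma dotProduct_pooledSSP_mulVec {g : ℕ} (y : Fin n → Fin d → ℝ) (dflt : Fin g → Fin d → ℝ)
    (C : Fin g → Finset (Fin n)) (v : Fin d → ℝ) :
    v ⬝ᵥ (pooledSSP y dflt C *ᵥ v) =
      ∑ j, ∑ i ∈ C j, ((y i - clusterMean y (dflt j) (C j)) ⬝ᵥ v) ^ 2 := by
  rw [pooledSSP, sum_mulVec, dotProduct_sum]
  exact sum_congr rfl fun j _ => dotProduct_sum_vecMulVec_self_mulVec _ _ _

lemma dotProduct_sspOf_mulVec_le (x : Fin n → Fin d → ℝ) (E : Finset (Fin n)) (c v : Fin d → ℝ) :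
    v ⬝ᵥ (sspOf x E *ᵥ v) ≤ ∑ i ∈ E, ((x i - c) ⬝ᵥ v) ^ 2 := by
  simp only [dotProduct_sspOf_mulVec, sub_dotProduct, smul_dotProduct, sum_dotProduct,
    smul_eq_mul]
  exact sum_sq_sub_mean_le E (fun i => x i ⬝ᵥ v) (c ⬝ᵥ v)

lemma dotProduct_sspOf_mulVec_pos {x : Fin n → Fin d → ℝ} {E : Finset (Fin n)}
    (hE : vectorSpan ℝ (Set.range fun i : E => x i) = ⊤) {v : Fin d → ℝ} (hv : v ≠ 0) :
    0 < v ⬝ᵥ (sspOf x E *ᵥ v) := by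
  rw [dotProduct_sspOf_mulVec]
  refine (sum_nonneg fun i _ => sq_nonneg _).lt_of_ne fun h => hv ?_
  have hzero := (sum_eq_zero_iff_of_nonneg fun i _ => sq_nonneg _).mp h.symm
  refine eq_zero_of_vectorSpan_eq_top_of_dotProduct_eq hE (c := v ⬝ᵥ (E.card : ℝ)⁻¹ • ∑ k ∈ E, x k)
    fun i => ?_
  have := pow_eq_zero_iff two_ne_zero |>.mp (hzero i i.2)
  rw [sub_dotProduct, sub_eq_zero] at this
  rwa [dotProduct_comm, dotProduct_comm v]

lemma dotProduct_sspOf_mulVec_le_pooledSSP {g : ℕ} {x y : Fin n → Fin d → ℝ}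
    (dflt : Fin g → Fin d → ℝ) {C : Fin g → Finset (Fin n)} {j : Fin g} {E : Finset (Fin n)}
    (hEC : E ⊆ C j) (hxy : ∀ i ∈ E, y i = x i) (v : Fin d → ℝ) :
    v ⬝ᵥ (sspOf x E *ᵥ v) ≤ v ⬝ᵥ (pooledSSP y dflt C *ᵥ v) := by
  set μ := clusterMean y (dflt j) (C j)
  calc v ⬝ᵥ (sspOf x E *ᵥ v) ≤ ∑ i ∈ E, ((x i - μ) ⬝ᵥ v) ^ 2 := dotProduct_sspOf_mulVec_le _ _ _ _
    _ = ∑ i ∈ E, ((y i - μ) ⬝ᵥ v) ^ 2 := sum_congr rfl fun i hi => by rw [hxy i hi]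
    _ ≤ ∑ i ∈ C j, ((y i - μ) ⬝ᵥ v) ^ 2 :=
      sum_le_sum_of_subset_of_nonneg hEC fun _ _ _ => sq_nonneg _
    _ ≤ ∑ k, ∑ i ∈ C k, ((y i - clusterMean y (dflt k) (C k)) ⬝ᵥ v) ^ 2 :=
      single_le_sum (f := fun k => ∑ i ∈ C k, ((y i - clusterMean y (dflt k) (C k)) ⬝ᵥ v) ^ 2)
        (fun _ _ => sum_nonneg fun _ _ => sq_nonneg _) (mem_univ j)
    _ = v ⬝ᵥ (pooledSSP y dflt C *ᵥ v) := (dotProduct_pooledSSP_mulVec _ _ _ _).symm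

def sspRayleighQuotients (x : Fin n → Fin d → ℝ) : Set ℝ :=
  {t | ∃ (E : Finset (Fin n)) (v : Fin d → ℝ),
    E.card = d + 1 ∧ v ⬝ᵥ v = 1 ∧ t = v ⬝ᵥ (sspOf x E *ᵥ v)}

lemma isCompact_sspRayleighQuotients (x : Fin n → Fin d → ℝ) :
    IsCompact (sspRayleighQuotients x) := by
  have h : sspRayleighQuotients x = ⋃ E ∈ {E : Finset (Fin n) | E.card = d + 1},
      (fun v => v ⬝ᵥ (sspOf x E *ᵥ v)) '' {v | v ⬝ᵥ v = 1} := by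
    ext t
    simp [sspRayleighQuotients, eq_comm]
  rw [h]
  exact (Set.toFinite _).isCompact_biUnion fun E _ =>
    (isCompact_setOf_dotProduct_self_eq_one _).image (by fun_prop)

lemma pos_of_isGLB_sspRayleighQuotients {x : Fin n → Fin d → ℝ} (hx : InGeneralPosition x)
    {α : ℝ} (hα : IsGLB (sspRayleighQuotients x) α) : 0 < α := by
  rcases (sspRayleighQuotients x).eq_empty_or_nonempty with h | h
  · rw [h, isGLB_empty_iff] at hα
    exact absurd hα (not_isTop α)
  obtain ⟨E, v, hE, hv, rfl⟩ := hα.mem_of_isClosed h (isCompact_sspRayleighQuotients x).isClosed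
  refine dotProduct_sspOf_mulVec_pos ((hx E hE).vectorSpan_eq_top_of_card_eq_finrank_add_one
    (by simp [hE])) ?_
  rintro rfl
  simp at hv

end SSP

lemma IsConfig.exists_subset_sdiff_card_eq {n g r d : ℕ} {C : Fin g → Finset (Fin n)}
    (hC : IsConfig r C) (hg : 0 < g) (h2r : n + g * (d + 1) ≤ 2 * r) {B : Finset (Fin n)}
    (hB : B.card ≤ n - r + g - 1) : ∃ j, ∃ E ⊆ C j \ B, E.card = d + 1 := by
  obtain ⟨hdisj, hcard⟩ := hC
  have hrn : r ≤ n := hcard ▸ (card_le_univ _).trans_eq (Fintype.card_fin n)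
  have hclean : r - B.card ≤ ∑ j, (C j \ B).card := calc
    r - B.card ≤ (univ.biUnion C \ B).card := hcard ▸ le_card_sdiff _ _
    _ ≤ (univ.biUnion fun j => C j \ B).card := card_le_card fun i => by simp
    _ = ∑ j, (C j \ B).card :=
      card_biUnion fun j _ k _ hjk => (hdisj j k hjk).mono sdiff_subset sdiff_subset
  have hlt : ∑ _j : Fin g, d < ∑ j, (C j \ B).card := by
    rw [sum_const, card_univ, Fintype.card_fin, smul_eq_mul]
    rw [mul_add, mul_one] at h2r
    omega
  obtain ⟨j, -, hj⟩ := exists_lt_of_sum_lt hlt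
  exact ⟨j, exists_subset_card_eq hj⟩

theorem tdc_ssp_eigenvalues_bounded_below_general {n d g r : ℕ} (hg : 0 < g)
    (h2r : n + g * (d + 1) ≤ 2 * r)
    (x : Fin n → Fin d → ℝ) (hx : InGeneralPosition x) (dflt : Fin g → Fin d → ℝ)
    (α : ℝ)
    (hα : IsGLB {t : ℝ | ∃ (E : Finset (Fin n)) (v : Fin d → ℝ),
        E.card = d + 1 ∧ v ⬝ᵥ v = 1 ∧ t = v ⬝ᵥ (sspOf x E *ᵥ v)} α) :
    0 < α ∧
    ∀ y : Fin n → Fin d → ℝ,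
      (Finset.univ.filter (fun i => y i ≠ x i)).card ≤ n - r + g - 1 →
      ∀ C : Fin g → Finset (Fin n), IsConfig r C →
        ∀ v : Fin d → ℝ, α * (v ⬝ᵥ v) ≤ v ⬝ᵥ (pooledSSP y dflt C *ᵥ v) := by
  refine ⟨pos_of_isGLB_sspRayleighQuotients hx hα, fun y hy C hC v => ?_⟩
  obtain ⟨j, E, hEC, hE⟩ := hC.exists_subset_sdiff_card_eq hg h2r hy
  have hxy : ∀ i ∈ E, y i = x i := fun i hi => by simpa using (mem_sdiff.mp (hEC hi)).2
  calc α * (v ⬝ᵥ v) ≤ v ⬝ᵥ (sspOf x E *ᵥ v) :=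
        mul_dotProduct_self_le_dotProduct_mulVec (fun u hu => hα.1 ⟨E, u, hE, hu, rfl⟩) v
    _ ≤ v ⬝ᵥ (pooledSSP y dflt C *ᵥ v) :=
        dotProduct_sspOf_mulVec_le_pooledSSP dflt (hEC.trans sdiff_subset) hxy v

/-- Theorem 4.3(a) of the paper.  Suppose `2r ≥ n + g(d+1)` and the data
are in general position.  Let `α` be the minimum, over all `(d+1)`-element subsets `E`, of
the smallest eigenvalue of `W_E` (characterized here as the greatest lower bound of the
Rayleigh quotients `vᵀ W_E v` over unit vectors `v`).  Then `α > 0` and, for every family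
differing from the data in at most `n − r + g − 1` indices, the pooled SSP matrix of every
configuration satisfies `vᵀ W v ≥ α‖v‖²`, i.e. all its eigenvalues are at least `α`. -/
theorem tdc_ssp_eigenvalues_bounded_below {n d g r : ℕ} (hd : 0 < d) (hg : 0 < g)
    (h2r : n + g * (d + 1) ≤ 2 * r) (hn : r ≤ n)
    (x : Fin n → Fin d → ℝ) (hx : InGeneralPosition x) (dflt : Fin g → Fin d → ℝ)
    (α : ℝ)
    (hα : IsGLB {t : ℝ | ∃ (E : Finset (Fin n)) (v : Fin d → ℝ),
        E.card = d + 1 ∧ v ⬝ᵥ v = 1 ∧ t = v ⬝ᵥ (sspOf x E *ᵥ v)} α) :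
    0 < α ∧
    ∀ y : Fin n → Fin d → ℝ,
      (Finset.univ.filter (fun i => y i ≠ x i)).card ≤ n - r + g - 1 →
      ∀ C : Fin g → Finset (Fin n), IsConfig r C →
        ∀ v : Fin d → ℝ, α * (v ⬝ᵥ v) ≤ v ⬝ᵥ (pooledSSP y dflt C *ᵥ v) :=
  tdc_ssp_eigenvalues_bounded_below_general hg h2r x hx dflt α hα
end

section
/- Let n ≥ r ≥ g·d+1 ≥ g, let the data x_1,…,x_n ∈ ℝ^d be in general position, and let t > 0. Then there exists a family y_1,…,y_n ∈ ℝ^d in general position, differing from x_1,…,x_n in at most n−r+g indices, such that for every configuration R over an r-element subset of {1,…,n} (for the data y_1,…,y_n) the pooled SSP matrix satisfies tr W_R ≥ t; in particular, the largest eigenvalue of the pooled SSP matrix of any det-minimizing configuration exceeds t/d. -/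
open Matrix Finset Real

set_option maxHeartbeats 1000000

/-! ### Auxiliary lemmas -/

/-- The complement of a proper affine subspace of `ℝ^d` is dense. -/
lemma dense_compl_proper_affine {d : ℕ} (A : AffineSubspace ℝ (Fin d → ℝ)) (hA : A ≠ ⊤) :
    Dense ((A : Set (Fin d → ℝ))ᶜ) := by
  rw [← interior_eq_empty_iff_dense_compl]
  by_contra h
  obtain ⟨z, hz⟩ := Set.nonempty_iff_ne_empty.2 h
  have h1 : affineSpan ℝ (interior (A : Set (Fin d → ℝ))) = ⊤ :=
    isOpen_interior.affineSpan_eq_top ⟨z, hz⟩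
  have h2 : affineSpan ℝ (interior (A : Set (Fin d → ℝ))) ≤ affineSpan ℝ (A : Set (Fin d → ℝ)) :=
    affineSpan_mono _ interior_subset
  rw [AffineSubspace.affineSpan_coe, h1, top_le_iff] at h2
  exact hA h2

/-- The complement of a finite union of proper affine subspaces of `ℝ^d` is dense. -/
lemma dense_compl_finite_union {d : ℕ} {ι : Type*} [DecidableEq ι] (𝒮 : Finset ι)
    (A : ι → AffineSubspace ℝ (Fin d → ℝ)) (hA : ∀ s ∈ 𝒮, A s ≠ ⊤) :
    Dense {z : Fin d → ℝ | ∀ s ∈ 𝒮, z ∉ A s} := by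
  classical
  induction 𝒮 using Finset.induction_on with
  | empty => simp
  | @insert a 𝒮' ha ih =>
    have heq : {z : Fin d → ℝ | ∀ s ∈ insert a 𝒮', z ∉ A s}
        = ((A a : Set (Fin d → ℝ))ᶜ) ∩ {z | ∀ s ∈ 𝒮', z ∉ A s} := by
      ext z
      simp only [Set.mem_setOf_eq, Set.mem_inter_iff, Set.mem_compl_iff, Finset.mem_insert]
      constructor
      · exact fun h => ⟨h a (Or.inl rfl), fun s hs => h s (Or.inr hs)⟩
      · rintro ⟨h1, h2⟩ s (rfl | hs)
        · exact h1
        · exact h2 s hs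
    rw [heq]
    exact Dense.inter_of_isOpen_left
      (dense_compl_proper_affine _ (hA a (Finset.mem_insert_self a 𝒮')))
      (ih fun s hs => hA s (Finset.mem_insert_of_mem hs))
      ((A a).closed_of_finiteDimensional.isOpen_compl)

/-- One admissible replacement: any point of a family in general position can be replaced
by a point which is arbitrarily far from all the other points, keeping general position. -/
lemma exists_far_replacement {n d : ℕ} (hd : 0 < d) (hn : d + 1 ≤ n)
    (y : Fin n → Fin d → ℝ) (hy : InGeneralPosition y) (i : Fin n) (D : ℝ) :
    ∃ z : Fin d → ℝ, InGeneralPosition (Function.update y i z) ∧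
      ∀ j : Fin n, j ≠ i → D ≤ ‖z - y j‖ := by
  classical
  haveI : Nonempty (Fin n) := ⟨⟨0, by omega⟩⟩
  haveI : Nonempty (Fin d) := ⟨⟨0, hd⟩⟩
  set 𝒮 : Finset (Finset (Fin n)) :=
    Finset.univ.filter (fun s : Finset (Fin n) => s.card = d + 1 ∧ i ∈ s) with h𝒮
  set A : Finset (Fin n) → AffineSubspace ℝ (Fin d → ℝ) :=
    fun s => affineSpan ℝ (((s.erase i).image y : Finset (Fin d → ℝ)) : Set (Fin d → ℝ)) with hA'
  have hA : ∀ s ∈ 𝒮, A s ≠ ⊤ := by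
    intro s hs htop
    rw [h𝒮, Finset.mem_filter] at hs
    obtain ⟨-, hcard, his⟩ := hs
    have hce : (s.erase i).card = (d - 1) + 1 := by
      rw [Finset.card_erase_of_mem his, hcard]; omega
    have hfr := finrank_vectorSpan_image_finset_le ℝ y (s.erase i) hce
    have hfr2 : Module.finrank ℝ (A s).direction ≤ d - 1 := by
      have : (A s).direction
          = vectorSpan ℝ (((s.erase i).image y : Finset (Fin d → ℝ)) : Set (Fin d → ℝ)) :=
        direction_affineSpan ℝ _
      rw [this]
      exact hfr
    rw [htop, AffineSubspace.direction_top] at hfr2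
    rw [finrank_top, Module.finrank_pi] at hfr2
    simp at hfr2
    omega
  have hdense := dense_compl_finite_union 𝒮 A hA
  set M := D + Finset.univ.sup' Finset.univ_nonempty (fun j : Fin n => ‖y j‖) with hM
  have hUopen : IsOpen {z : Fin d → ℝ | M < ‖z‖} := isOpen_lt continuous_const continuous_norm
  have hUne : {z : Fin d → ℝ | M < ‖z‖}.Nonempty := by
    refine ⟨fun _ => |M| + 1, ?_⟩
    have : ‖(fun _ => |M| + 1 : Fin d → ℝ)‖ = ‖(|M| + 1 : ℝ)‖ := pi_norm_const _
    simp only [Set.mem_setOf_eq, this]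
    rw [Real.norm_eq_abs]
    have h1 : M ≤ |M| := le_abs_self M
    have h2 : (0:ℝ) ≤ |M| + 1 := by positivity
    rw [abs_of_nonneg h2]
    linarith
  obtain ⟨z, hzgood, hzU⟩ := hdense.exists_mem_open hUopen hUne
  refine ⟨z, ?_, ?_⟩
  · intro s hcard
    by_cases his : i ∈ s
    · have hind : AffineIndependent ℝ
          (fun x : {j : s // j ≠ (⟨i, his⟩ : s)} => Function.update y i z ((x : s) : Fin n)) := by
        have h1 := (hy s hcard).comp_embedding
          (Function.Embedding.subtype (fun j : s => j ≠ (⟨i, his⟩ : s)))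
        have he : (fun x : {j : s // j ≠ (⟨i, his⟩ : s)} => Function.update y i z ((x : s) : Fin n))
            = fun x : {j : s // j ≠ (⟨i, his⟩ : s)} => y ((x : s) : Fin n) := by
          funext x
          exact Function.update_of_ne (fun h => x.2 (Subtype.ext h)) _ _
        rw [he]
        exact h1
      apply AffineIndependent.affineIndependent_of_notMem_span (i := (⟨i, his⟩ : s)) hind
      have hupd : Function.update y i z ((⟨i, his⟩ : s) : Fin n) = z := Function.update_self i z y
      have hset : ((fun x : s => Function.update y i z (x : Fin n)) '' {x | x ≠ (⟨i, his⟩ : s)})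
          = (((s.erase i).image y : Finset (Fin d → ℝ)) : Set (Fin d → ℝ)) := by
        ext v
        constructor
        · rintro ⟨x, hx, rfl⟩
          have hxi : (x : Fin n) ≠ i := fun h => hx (Subtype.ext h)
          show Function.update y i z (x : Fin n) ∈ _
          rw [Function.update_of_ne hxi]
          exact Finset.mem_coe.2 (Finset.mem_image.2 ⟨x, Finset.mem_erase.2 ⟨hxi, x.2⟩, rfl⟩)
        · intro hv
          obtain ⟨j, hj, rfl⟩ := Finset.mem_image.1 (Finset.mem_coe.1 hv)
          obtain ⟨hji, hjs⟩ := Finset.mem_erase.1 hj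
          exact ⟨⟨j, hjs⟩, fun h => hji (congrArg Subtype.val h), Function.update_of_ne hji _ _⟩
      rw [hupd, hset]
      exact hzgood s (by rw [h𝒮, Finset.mem_filter]; exact ⟨Finset.mem_univ s, hcard, his⟩)
    · have he : (fun j : s => Function.update y i z (j : Fin n)) = fun j : s => y (j : Fin n) := by
        funext j
        exact Function.update_of_ne (fun h : (j : Fin n) = i => his (h ▸ j.2)) _ _
      rw [he]
      exact hy s hcard
  · intro j hj
    have h1 : ‖z‖ - ‖y j‖ ≤ ‖z - y j‖ := norm_sub_norm_le z (y j)
    have h2 : ‖y j‖ ≤ Finset.univ.sup' Finset.univ_nonempty (fun j : Fin n => ‖y j‖) :=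
      Finset.le_sup' (f := fun j : Fin n => ‖y j‖) (Finset.mem_univ j)
    have h3 : M < ‖z‖ := hzU
    rw [hM] at h3
    linarith

/-- Iterated admissible replacements: all the points indexed by `P` can be replaced by
points pairwise far apart and far from all other points, keeping general position. -/
lemma exists_far_family {n d : ℕ} (hd : 0 < d) (hn : d + 1 ≤ n) (D : ℝ)
    (P : Finset (Fin n)) :
    ∀ x : Fin n → Fin d → ℝ, InGeneralPosition x →
    ∃ y : Fin n → Fin d → ℝ, InGeneralPosition y ∧ (∀ i ∉ P, y i = x i) ∧
      (∀ p ∈ P, ∀ j : Fin n, j ≠ p → D ≤ ‖y p - y j‖) := by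
  classical
  induction P using Finset.induction_on with
  | empty =>
    exact fun x hx => ⟨x, hx, fun i _ => rfl, fun p hp => absurd hp (Finset.notMem_empty p)⟩
  | @insert a P ha ih =>
    intro x hx
    obtain ⟨y, hy, hyx, hyfar⟩ := ih x hx
    obtain ⟨z, hz, hzfar⟩ := exists_far_replacement hd hn y hy a D
    refine ⟨Function.update y a z, hz, ?_, ?_⟩
    · intro i hi
      rw [Finset.mem_insert, not_or] at hi
      rw [Function.update_of_ne hi.1, hyx i hi.2]
    · intro p hp j hj
      rcases Finset.mem_insert.1 hp with rfl | hpP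
      · rw [Function.update_self, Function.update_of_ne hj]
        exact hzfar j hj
      · have hpa : p ≠ a := fun h => ha (h ▸ hpP)
        rw [Function.update_of_ne hpa]
        by_cases hja : j = a
        · subst hja
          rw [Function.update_self, norm_sub_rev]
          exact hzfar p hpa
        · rw [Function.update_of_ne hja]
          exact hyfar p hpP j hj

/-- In any configuration over an `r`-element subset, some cluster contains two distinct
points one of which belongs to the replaced set `F`. -/
lemma exists_pair_same_cluster {n g r : ℕ} (hg : 0 < g) (hrg : g + 1 ≤ r) (hrn : r ≤ n)
    (F : Finset (Fin n)) (hF : F.card = n - r + g) (C : Fin g → Finset (Fin n))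
    (hC : IsConfig r C) :
    ∃ (j : Fin g) (p q : Fin n), p ∈ C j ∧ q ∈ C j ∧ q ≠ p ∧ p ∈ F := by
  classical
  haveI : Nonempty (Fin g) := ⟨⟨0, hg⟩⟩
  set R := Finset.univ.biUnion C with hRdef
  have hR : R.card = r := hC.2
  have hRF : g ≤ (R ∩ F).card := by
    have h1 := Finset.card_inter_add_card_union R F
    have h2 : (R ∪ F).card ≤ n := by
      calc (R ∪ F).card ≤ (Finset.univ : Finset (Fin n)).card :=
            Finset.card_le_card (Finset.subset_univ _)
        _ = n := by simp
    omega
  by_contra hcon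
  push_neg at hcon
  set φ : Fin n → Fin g := fun p =>
    if h : ∃ j, p ∈ C j then h.choose else Classical.arbitrary _ with hφdef
  have hφ : ∀ p ∈ R, p ∈ C (φ p) := by
    intro p hp
    obtain ⟨j, -, hj⟩ := Finset.mem_biUnion.1 hp
    have h : ∃ j, p ∈ C j := ⟨j, hj⟩
    simp only [hφdef, dif_pos h]
    exact h.choose_spec
  have hsingle : ∀ (j : Fin g) (p : Fin n), p ∈ C j → p ∈ F → ∀ q ∈ C j, q = p := by
    intro j p hp hpF q hq
    by_contra hne
    exact hcon j p q hp hq hne hpF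
  have hinj : Set.InjOn φ ↑(R ∩ F) := by
    intro p1 h1 p2 h2 he
    rw [Finset.coe_inter, Set.mem_inter_iff] at h1 h2
    have hp1 := hφ p1 h1.1
    have hp2 := hφ p2 h2.1
    rw [he] at hp1
    exact (hsingle (φ p2) p2 hp2 h2.2 p1 hp1).symm ▸ rfl
  have himg : (R ∩ F).image φ = Finset.univ := by
    apply Finset.eq_univ_of_card
    rw [Finset.card_image_of_injOn hinj]
    have : ((R ∩ F)).card ≤ Fintype.card (Fin g) := by
      rw [← Finset.card_image_of_injOn hinj, ← Finset.card_univ]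
      exact Finset.card_le_card (Finset.subset_univ _)
    have hcard : Fintype.card (Fin g) = g := Fintype.card_fin g
    omega
  have hsmall : ∀ j : Fin g, (C j).card ≤ 1 := by
    intro j
    have hj : j ∈ (R ∩ F).image φ := himg ▸ Finset.mem_univ j
    obtain ⟨p, hp, rfl⟩ := Finset.mem_image.1 hj
    rw [Finset.mem_inter] at hp
    have hpC := hφ p hp.1
    have := hsingle (φ p) p hpC hp.2
    have hsub : C (φ p) ⊆ {p} := fun q hq => Finset.mem_singleton.2 (this q hq)
    calc (C (φ p)).card ≤ ({p} : Finset (Fin n)).card := Finset.card_le_card hsub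
      _ = 1 := Finset.card_singleton p
  have : r ≤ g := by
    calc r = R.card := hR.symm
      _ ≤ ∑ j, (C j).card := Finset.card_biUnion_le
      _ ≤ ∑ _j : Fin g, 1 := Finset.sum_le_sum fun j _ => hsmall j
      _ = g := by simp
  omega

lemma dot_self_nonneg' {d : ℕ} (v : Fin d → ℝ) : 0 ≤ v ⬝ᵥ v :=
  Finset.sum_nonneg fun k _ => mul_self_nonneg (v k)

lemma trace_pooledSSP {n d g : ℕ} (y : Fin n → Fin d → ℝ) (dflt : Fin g → Fin d → ℝ)
    (C : Fin g → Finset (Fin n)) :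
    (pooledSSP y dflt C).trace =
      ∑ j, ∑ i ∈ C j, (y i - clusterMean y (dflt j) (C j)) ⬝ᵥ
        (y i - clusterMean y (dflt j) (C j)) := by
  rw [pooledSSP, Matrix.trace_sum]
  refine Finset.sum_congr rfl fun j _ => ?_
  rw [Matrix.trace_sum]
  refine Finset.sum_congr rfl fun i _ => ?_
  simp [Matrix.trace, Matrix.diag, Matrix.vecMulVec_apply, dotProduct]

lemma pair_bound {d : ℕ} (a b m : Fin d → ℝ) :
    (a - b) ⬝ᵥ (a - b) / 2 ≤ (a - m) ⬝ᵥ (a - m) + (b - m) ⬝ᵥ (b - m) := by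
  simp only [dotProduct, Pi.sub_apply]
  rw [div_le_iff₀ (by norm_num : (0:ℝ) < 2), ← Finset.sum_add_distrib, Finset.sum_mul]
  refine Finset.sum_le_sum fun k _ => ?_
  nlinarith [sq_nonneg (a k + b k - 2 * m k)]

lemma sq_le_dot {d : ℕ} (v : Fin d → ℝ) (D : ℝ) (hD : 0 < D) (h : D ≤ ‖v‖) :
    D ^ 2 ≤ v ⬝ᵥ v := by
  obtain ⟨k, hk⟩ : ∃ k, D ≤ |v k| := by
    by_contra hno
    push_neg at hno
    have : ‖v‖ < D := (pi_norm_lt_iff hD).2 fun k => by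
      rw [Real.norm_eq_abs]; exact hno k
    linarith
  have h1 : D ^ 2 ≤ (v k) ^ 2 := by
    have := pow_le_pow_left₀ hD.le hk 2
    rwa [sq_abs] at this
  calc D ^ 2 ≤ (v k) ^ 2 := h1
    _ = v k * v k := sq (v k)
    _ ≤ v ⬝ᵥ v := Finset.single_le_sum (fun i _ => mul_self_nonneg (v i)) (Finset.mem_univ k)

/-- Theorem 4.3(c) of the paper.  Let `n ≥ r ≥ g·d + 1`, the data in
general position and `t > 0`.  Then `n − r + g` suitable admissible replacements produce a
family (in general position) such that the pooled SSP matrix of every configuration has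
trace at least `t`; in particular, the largest eigenvalue of the pooled SSP matrix of any
det-minimizing configuration exceeds `t/d` (witnessed by a Rayleigh quotient). -/
theorem tdc_ssp_breaks_down {n d g r : ℕ} (hd : 0 < d) (hrn : r ≤ n) (hr : g * d + 1 ≤ r)
    (x : Fin n → Fin d → ℝ) (hx : InGeneralPosition x) (dflt : Fin g → Fin d → ℝ)
    (t : ℝ) (ht : 0 < t) :
    ∃ y : Fin n → Fin d → ℝ, InGeneralPosition y ∧
      (Finset.univ.filter (fun i => y i ≠ x i)).card ≤ n - r + g ∧
      (∀ C : Fin g → Finset (Fin n), IsConfig r C → t ≤ (pooledSSP y dflt C).trace) ∧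
      (∀ C : Fin g → Finset (Fin n), IsConfig r C →
        (∀ P : Fin g → Finset (Fin n), IsConfig r P →
          (pooledSSP y dflt C).det ≤ (pooledSSP y dflt P).det) →
        ∃ v : Fin d → ℝ, v ≠ 0 ∧ (t / d) * (v ⬝ᵥ v) < v ⬝ᵥ (pooledSSP y dflt C *ᵥ v)) := by
  classical
  rcases Nat.eq_zero_or_pos g with hg0 | hg
  · -- no clusters: there are no configurations at all
    subst hg0
    have hnoconf : ∀ C : Fin 0 → Finset (Fin n), ¬ IsConfig r C := by
      intro C hC
      have := hC.2
      simp only [Finset.univ_eq_empty, Finset.biUnion_empty, Finset.card_empty] at this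
      omega
    refine ⟨x, hx, ?_, ?_, ?_⟩
    · have : Finset.univ.filter (fun i => x i ≠ x i) = ∅ := by simp
      rw [this]
      simp
    · exact fun C hC => absurd hC (hnoconf C)
    · exact fun C hC => absurd hC (hnoconf C)
  · -- the interesting case `g ≥ 1`
    have hdg : d ≤ g * d := Nat.le_mul_of_pos_left d hg
    have hgd : g ≤ g * d := Nat.le_mul_of_pos_right g hd
    have hdn : d + 1 ≤ n := by omega
    have hgr : g + 1 ≤ r := by omega
    have hm : n - r + g ≤ n := by omega
    set D : ℝ := 2 * Real.sqrt t + 1 with hD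
    have hD0 : 0 < D := by
      have := Real.sqrt_nonneg t
      rw [hD]; linarith
    have hDsq : 4 * t ≤ D ^ 2 := by
      have h1 : Real.sqrt t ^ 2 = t := Real.sq_sqrt ht.le
      have h2 := Real.sqrt_nonneg t
      rw [hD]; nlinarith
    set F : Finset (Fin n) := (Finset.univ : Finset (Fin (n - r + g))).map
      (Fin.castLEEmb hm) with hF
    have hFcard : F.card = n - r + g := by
      rw [hF, Finset.card_map, Finset.card_univ, Fintype.card_fin]
    obtain ⟨y, hy, hyx, hyfar⟩ := exists_far_family hd hdn D F x hx
    have key : ∀ C : Fin g → Finset (Fin n), IsConfig r C →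
        2 * t ≤ (pooledSSP y dflt C).trace := by
      intro C hC
      obtain ⟨j, p, q, hpj, hqj, hqp, hpF⟩ :=
        exists_pair_same_cluster hg hgr hrn F hFcard C hC
      set mj := clusterMean y (dflt j) (C j) with hmj
      have htrace := trace_pooledSSP y dflt C
      have h1 : ∑ i ∈ C j, (y i - clusterMean y (dflt j) (C j)) ⬝ᵥ
          (y i - clusterMean y (dflt j) (C j)) ≤ (pooledSSP y dflt C).trace := by
        rw [htrace]
        exact Finset.single_le_sum
          (f := fun j' => ∑ i ∈ C j', (y i - clusterMean y (dflt j') (C j')) ⬝ᵥ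
            (y i - clusterMean y (dflt j') (C j')))
          (fun j' _ => Finset.sum_nonneg fun i _ => dot_self_nonneg' _) (Finset.mem_univ j)
      have hsub : ({p, q} : Finset (Fin n)) ⊆ C j := by
        intro a ha
        rcases Finset.mem_insert.1 ha with rfl | ha'
        · exact hpj
        · rw [Finset.mem_singleton.1 ha']; exact hqj
      have hpq : p ≠ q := fun h => hqp h.symm
      have h2 : (y p - mj) ⬝ᵥ (y p - mj) + (y q - mj) ⬝ᵥ (y q - mj)
          ≤ ∑ i ∈ C j, (y i - mj) ⬝ᵥ (y i - mj) := by
        rw [← Finset.sum_pair (f := fun i => (y i - mj) ⬝ᵥ (y i - mj)) hpq]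
        exact Finset.sum_le_sum_of_subset_of_nonneg hsub fun i _ _ => dot_self_nonneg' _
      have h3 := pair_bound (y p) (y q) mj
      have h4 : D ^ 2 ≤ (y p - y q) ⬝ᵥ (y p - y q) :=
        sq_le_dot _ D hD0 (hyfar p hpF q hqp)
      have h5 : ∑ i ∈ C j, (y i - mj) ⬝ᵥ (y i - mj)
          = ∑ i ∈ C j, (y i - clusterMean y (dflt j) (C j)) ⬝ᵥ
            (y i - clusterMean y (dflt j) (C j)) := by rw [hmj]
      rw [← h5] at h1
      nlinarith
    refine ⟨y, hy, ?_, ?_, ?_⟩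
    · have hsub : Finset.univ.filter (fun i => y i ≠ x i) ⊆ F := by
        intro i hi
        rw [Finset.mem_filter] at hi
        by_contra hiF
        exact hi.2 (hyx i hiF)
      calc (Finset.univ.filter (fun i => y i ≠ x i)).card ≤ F.card := Finset.card_le_card hsub
        _ = n - r + g := hFcard
    · intro C hC
      have := key C hC
      linarith
    · intro C hC _hmin
      have htr := key C hC
      have hdR : (0:ℝ) < d := by exact_mod_cast hd
      obtain ⟨k, hk⟩ : ∃ k : Fin d, t / d < (pooledSSP y dflt C) k k := by
        by_contra hno
        push_neg at hno
        have h1 : (pooledSSP y dflt C).trace = ∑ k : Fin d, (pooledSSP y dflt C) k k := rfl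
        have h2 : ∑ k : Fin d, (pooledSSP y dflt C) k k ≤ ∑ _k : Fin d, t / d :=
          Finset.sum_le_sum fun k _ => hno k
        have h3 : ∑ _k : Fin d, (t / d) = d * (t / d) := by
          rw [Finset.sum_const, Finset.card_univ, Fintype.card_fin, nsmul_eq_mul]
        have h4 : (d : ℝ) * (t / d) = t := by
          field_simp
        rw [h3, h4] at h2
        rw [h1] at htr
        linarith
      refine ⟨Pi.single k 1, ?_, ?_⟩
      · intro h0
        have := congrFun h0 k
        simp at this
      · have hvv : (Pi.single k 1 : Fin d → ℝ) ⬝ᵥ Pi.single k 1 = 1 := by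
          simp [dotProduct, Pi.single_apply]
        have hWv : (Pi.single k 1 : Fin d → ℝ) ⬝ᵥ (pooledSSP y dflt C *ᵥ Pi.single k 1)
            = (pooledSSP y dflt C) k k := by
          simp [Matrix.mulVec_single, dotProduct, Pi.single_apply]
        rw [hvv, hWv, mul_one]
        exact hk
end

section
/- Let x_0, x_1, …, x_d ∈ ℝ^d, let m = (1/(d+1)) Σ_{i=0}^d x_i and let W = Σ_{i=0}^d (x_i − m)(x_i − m)^T be the SSP matrix of these d+1 points. Then det W = (1/(d+1)) · (det[x_1 − x_0 | x_2 − x_0 | … | x_d − x_0])², where [x_1 − x_0 | … | x_d − x_0] is the d×d matrix with columns x_i − x_0; equivalently, det W equals 1/(d+1) times the squared d-dimensional volume of the parallelepiped spanned by x_0,…,x_d. -/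
/-!
Put `B = [x₁ - x₀ | … | x_d - x₀]` and `c = 1/(d+1)`. Moving the reference point from the mean
`m` to `x₀` gives `W = B Bᵀ - (d+1) (m - x₀)(m - x₀)ᵀ`, and `m - x₀ = c B 𝟙`, so
`W = B (I - c 𝟙𝟙ᵀ) Bᵀ`. By the matrix determinant lemma `det (I - c 𝟙𝟙ᵀ) = 1 - c d = c`.
-/

open Matrix Finset

theorem Matrix.mul_eq_sum_vecMulVec {l m n α : Type*} [NonUnitalNonAssocSemiring α] [Fintype m]
    (A : Matrix l m α) (B : Matrix m n α) : A * B = ∑ j, vecMulVec (Aᵀ j) (B j) := by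
  ext i k
  simp only [mul_apply, Matrix.sum_apply, vecMulVec_apply, transpose_apply]

/-- Steiner's parallel-axis identity. -/
theorem Matrix.sum_vecMulVec_sub_mean {ι n R : Type*} [CommRing R] [Fintype ι]
    (x : ι → n → R) (m v : n → R) (hm : Fintype.card ι • m = ∑ i, x i) :
    ∑ i, vecMulVec (x i - m) (x i - m) =
      ∑ i, vecMulVec (x i - v) (x i - v) - Fintype.card ι • vecMulVec (m - v) (m - v) := by
  ext a b
  have hsum (k : n) : ∑ i, x i k = Fintype.card ι • m k := by
    rw [← Finset.sum_apply, ← hm, Pi.smul_apply]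
  simp only [Matrix.sum_apply, Matrix.sub_apply, Matrix.smul_apply, vecMulVec_apply, Pi.sub_apply,
    sub_mul, mul_sub, sum_sub_distrib, ← sum_mul, ← mul_sum, hsum, sum_const, card_univ,
    nsmul_eq_mul]
  ring

theorem Matrix.det_one_sub_smul_vecMulVec_one {n R : Type*} [Fintype n] [DecidableEq n]
    [CommRing R] (c : R) : (1 - c • vecMulVec (1 : n → R) 1).det = 1 - c * Fintype.card n := by
  rw [sub_eq_add_neg, ← neg_smul, ← smul_vecMulVec, vecMulVec_eq Unit,
    det_one_add_replicateCol_mul_replicateRow]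
  simp [dotProduct, sub_eq_add_neg, mul_comm]

theorem Matrix.mul_one_sub_smul_vecMulVec_one_mul_transpose {m n R : Type*} [Fintype n]
    [DecidableEq n] [CommRing R] (B : Matrix m n R) (c : R) :
    B * (1 - c • vecMulVec 1 1 : Matrix n n R) * Bᵀ =
      B * Bᵀ - c • vecMulVec (B *ᵥ 1) (B *ᵥ 1) := by
  rw [Matrix.mul_sub, Matrix.sub_mul, Matrix.mul_one, Matrix.mul_smul, Matrix.smul_mul,
    mul_vecMulVec, vecMulVec_mul, vecMul_transpose]

/-- Lemma 4.1 of the paper.  For `d + 1` points `x_0,…,x_d ∈ ℝ^d` with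
mean `m` and SSP matrix `W = Σ_i (x_i − m)(x_i − m)ᵀ`, one has
`det W = (1/(d+1)) · det(x_1 − x_0, …, x_d − x_0)²`, i.e. `1/(d+1)` times the squared
`d`-dimensional volume of the parallelepiped spanned by the points. -/
theorem det_ssp_eq_volume_sq {d : ℕ} (x : Fin (d + 1) → Fin d → ℝ)
    (m : Fin d → ℝ) (hm : m = ((d : ℝ) + 1)⁻¹ • ∑ i, x i)
    (W : Matrix (Fin d) (Fin d) ℝ)
    (hW : W = ∑ i, Matrix.vecMulVec (x i - m) (x i - m)) :
    W.det = ((d : ℝ) + 1)⁻¹ * (Matrix.of fun k l : Fin d => x l.succ k - x 0 k).det ^ 2 := by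
  set B : Matrix (Fin d) (Fin d) ℝ := of fun k l => x l.succ k - x 0 k
  set c : ℝ := ((d : ℝ) + 1)⁻¹
  have hc : ((d : ℝ) + 1) * c = 1 := mul_inv_cancel₀ (by positivity)
  have hsum : Fintype.card (Fin (d + 1)) • m = ∑ i, x i := by
    rw [hm, Fintype.card_fin, ← Nat.cast_smul_eq_nsmul ℝ, smul_smul, Nat.cast_succ, hc, one_smul]
  have hsum_sub : ∑ i, (x i - x 0) = ∑ j, Bᵀ j := by
    rw [Fin.sum_univ_succ, sub_self, zero_add]
    rfl
  have hcentroid : m - x 0 = c • (B *ᵥ 1) := by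
    rw [mulVec_one, ← hsum_sub, sum_sub_distrib, sum_const, card_univ, ← hsum, ← smul_sub,
      Fintype.card_fin, ← Nat.cast_smul_eq_nsmul ℝ, smul_smul, Nat.cast_succ, mul_comm, hc,
      one_smul]
  have hgram : ∑ i, vecMulVec (x i - x 0) (x i - x 0) = B * Bᵀ := by
    rw [Fin.sum_univ_succ, sub_self, zero_vecMulVec, zero_add, mul_eq_sum_vecMulVec]
    rfl
  have hW_factor : W = B * (1 - c • vecMulVec 1 1) * Bᵀ := by
    rw [mul_one_sub_smul_vecMulVec_one_mul_transpose, hW, sum_vecMulVec_sub_mean x m (x 0) hsum,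
      hgram, hcentroid, smul_vecMulVec, vecMulVec_smul, smul_smul, Fintype.card_fin,
      ← Nat.cast_smul_eq_nsmul ℝ, smul_smul, Nat.cast_succ, ← mul_assoc, hc, one_mul]
  rw [hW_factor, det_mul, det_mul, det_transpose, det_one_sub_smul_vecMulVec_one, Fintype.card_fin]
  linear_combination (-B.det ^ 2) * hc
end

section
/- Let g ≥ 2, p ≥ 2, q ≥ g−2 be natural numbers, let r = p + g, and let F = {x_1,…,x_p} ∪ {y_1,y_2} ∪ {z_1,…,z_q} be a set of p + 2 + q pairwise distinct elements. Then every partition R of an r-element subset of F into g classes either equals R* = {{x_1,…,x_p}, {y_1,y_2}} together with g−2 one-point classes each consisting of some z_l, or possesses a class C that contains some pair {x_i, y_k}, or some pair {z_l, u} with u ≠ z_l. -/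
open Finset

/-- Lemma 4.2 of the paper.  Let `g ≥ 2`, `p ≥ 2`, `q ≥ g − 2`,
`r = p + g`, and let `F = {x_1,…,x_p} ∪ {y_1,y_2} ∪ {z_1,…,z_q}` consist of `p + 2 + q`
pairwise distinct elements.  Every partition of an `r`-element subset of `F` into `g`
pairwise disjoint classes either is of the form
`R* = {{x_1,…,x_p}, {y_1,y_2}, g−2 one-point classes from the z's}`, or possesses a class
containing some pair `{x_i, y_k}` or some pair `{z_l, u}` with `u ≠ z_l`. -/
theorem partition_combinatorics {α : Type*} [DecidableEq α] {g p q r : ℕ}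
    (hg : 2 ≤ g) (hp : 2 ≤ p) (hq : g - 2 ≤ q) (hr : r = p + g)
    (xx : Fin p → α) (yy : Fin 2 → α) (zz : Fin q → α)
    (hdistinct : (Finset.univ.image xx ∪ Finset.univ.image yy ∪ Finset.univ.image zz).card
      = p + 2 + q)
    (C : Fin g → Finset α)
    (hsub : ∀ j, C j ⊆ Finset.univ.image xx ∪ Finset.univ.image yy ∪ Finset.univ.image zz)
    (hdisj : ∀ j k : Fin g, j ≠ k → Disjoint (C j) (C k))
    (hcard : (Finset.univ.biUnion C).card = r) :
    (∃ j₁ j₂ : Fin g, j₁ ≠ j₂ ∧ C j₁ = Finset.univ.image xx ∧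
        C j₂ = Finset.univ.image yy ∧
        ∀ j : Fin g, j ≠ j₁ → j ≠ j₂ → ∃ l : Fin q, C j = {zz l}) ∨
    (∃ j : Fin g,
      (∃ (i : Fin p) (k : Fin 2), xx i ∈ C j ∧ yy k ∈ C j) ∨
      (∃ (l : Fin q) (u : α), u ∈ C j ∧ zz l ∈ C j ∧ u ≠ zz l)) := by
  classical
  by_cases hbad : (∃ j : Fin g,
      (∃ (i : Fin p) (k : Fin 2), xx i ∈ C j ∧ yy k ∈ C j) ∨
      (∃ (l : Fin q) (u : α), u ∈ C j ∧ zz l ∈ C j ∧ u ≠ zz l))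
  · exact Or.inr hbad
  push_neg at hbad
  left
  set X := Finset.univ.image xx with hXdef
  set Y := Finset.univ.image yy with hYdef
  set Z := Finset.univ.image zz with hZdef
  -- cardinalities
  have hXle : X.card ≤ p := by
    simpa using Finset.card_image_le (s := (Finset.univ : Finset (Fin p))) (f := xx)
  have hYle : Y.card ≤ 2 := by
    simpa using Finset.card_image_le (s := (Finset.univ : Finset (Fin 2))) (f := yy)
  have hZle : Z.card ≤ q := by
    simpa using Finset.card_image_le (s := (Finset.univ : Finset (Fin q))) (f := zz)
  have hu1 : (X ∪ Y ∪ Z).card ≤ (X ∪ Y).card + Z.card := Finset.card_union_le _ _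
  have hu2 : (X ∪ Y).card ≤ X.card + Y.card := Finset.card_union_le _ _
  have hXc : X.card = p := by omega
  have hYc : Y.card = 2 := by omega
  -- any class containing a z is a singleton
  have hz : ∀ j (l : Fin q), zz l ∈ C j → C j = {zz l} := by
    intro j l hl
    apply Finset.eq_singleton_iff_unique_mem.mpr
    exact ⟨hl, fun u hu => (hbad j).2 l u hu hl⟩
  -- classification
  have hclass : ∀ j, ¬ (C j ⊆ X) → ¬ (C j ⊆ Y) → ∃ l, C j = {zz l} := by
    intro j hx hy
    obtain ⟨u, hu, hux⟩ := Finset.not_subset.mp hx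
    have hu' := hsub j hu
    simp only [Finset.mem_union] at hu'
    rcases hu' with (huX | huY) | huZ
    · exact absurd huX hux
    · -- u ∈ Y : get some y in C j
      obtain ⟨k, _, hk⟩ := Finset.mem_image.mp huY
      obtain ⟨v, hv, hvy⟩ := Finset.not_subset.mp hy
      have hv' := hsub j hv
      simp only [Finset.mem_union] at hv'
      rcases hv' with (hvX | hvY) | hvZ
      · obtain ⟨i, _, hi⟩ := Finset.mem_image.mp hvX
        exact absurd (hk ▸ hu) ((hbad j).1 i k (hi ▸ hv))
      · exact absurd hvY hvy
      · obtain ⟨l, _, hl⟩ := Finset.mem_image.mp hvZ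
        exact ⟨l, hz j l (hl ▸ hv)⟩
    · obtain ⟨l, _, hl⟩ := Finset.mem_image.mp huZ
      exact ⟨l, hz j l (hl ▸ hu)⟩
  set A := Finset.univ.filter (fun j : Fin g => C j ⊆ X) with hAdef
  set B := Finset.univ.filter (fun j : Fin g => ¬ (C j ⊆ X) ∧ C j ⊆ Y) with hBdef
  set D := Finset.univ.filter (fun j : Fin g => ¬ (C j ⊆ X) ∧ ¬ (C j ⊆ Y)) with hDdef
  have key : ∀ f : Fin g → ℕ,
      (∑ j ∈ A, f j) + (∑ j ∈ B, f j) + (∑ j ∈ D, f j) = ∑ j, f j := by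
    intro f
    rw [hAdef, hBdef, hDdef, Finset.sum_filter, Finset.sum_filter, Finset.sum_filter,
      ← Finset.sum_add_distrib, ← Finset.sum_add_distrib]
    apply Finset.sum_congr rfl
    intro j _
    by_cases h1 : C j ⊆ X <;> by_cases h2 : C j ⊆ Y <;> simp [h1, h2]
  have total : ∑ j, (C j).card = p + g := by
    rw [← Finset.card_biUnion (fun x _ y _ h => hdisj x y h)]
    omega
  have cardsum : A.card + B.card + D.card = g := by
    have := key (fun _ => 1)
    simpa using this
  have sA : (∑ j ∈ A, (C j).card) ≤ p := by
    have hsubX : A.biUnion C ⊆ X := by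
      apply Finset.biUnion_subset.mpr
      intro j hj
      exact (Finset.mem_filter.mp hj).2
    calc (∑ j ∈ A, (C j).card) = (A.biUnion C).card :=
          (Finset.card_biUnion (fun x _ y _ h => hdisj x y h)).symm
      _ ≤ X.card := Finset.card_le_card hsubX
      _ = p := hXc
  have sB : (∑ j ∈ B, (C j).card) ≤ 2 := by
    have hsubY : B.biUnion C ⊆ Y := by
      apply Finset.biUnion_subset.mpr
      intro j hj
      exact (Finset.mem_filter.mp hj).2.2
    calc (∑ j ∈ B, (C j).card) = (B.biUnion C).card :=
          (Finset.card_biUnion (fun x _ y _ h => hdisj x y h)).symm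
      _ ≤ Y.card := Finset.card_le_card hsubY
      _ = 2 := hYc
  have sD : (∑ j ∈ D, (C j).card) = D.card := by
    rw [Finset.card_eq_sum_ones]
    apply Finset.sum_congr rfl
    intro j hj
    obtain ⟨l, hl⟩ := hclass j (Finset.mem_filter.mp hj).2.1 (Finset.mem_filter.mp hj).2.2
    simp [hl]
  have keyC := key (fun j => (C j).card)
  rw [total] at keyC
  have hA0 : A.card = 0 → (∑ j ∈ A, (C j).card) = 0 := by
    intro h; rw [Finset.card_eq_zero.mp h]; simp
  have hB0 : B.card = 0 → (∑ j ∈ B, (C j).card) = 0 := by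
    intro h; rw [Finset.card_eq_zero.mp h]; simp
  have hA1 : A.card = 1 := by
    by_cases h1 : A.card = 0
    · have := hA0 h1
      by_cases h2 : B.card = 0
      · have := hB0 h2; omega
      · omega
    · by_cases h2 : B.card = 0
      · have := hB0 h2; omega
      · omega
  have hB1 : B.card = 1 := by
    by_cases h2 : B.card = 0
    · have := hB0 h2; omega
    · omega
  have hD1 : D.card = g - 2 := by omega
  have hsAp : (∑ j ∈ A, (C j).card) = p := by omega
  have hsB2 : (∑ j ∈ B, (C j).card) = 2 := by omega
  obtain ⟨j₁, hj1⟩ := Finset.card_eq_one.mp hA1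
  obtain ⟨j₂, hj2⟩ := Finset.card_eq_one.mp hB1
  have hj1A : j₁ ∈ A := by rw [hj1]; exact Finset.mem_singleton_self _
  have hj2B : j₂ ∈ B := by rw [hj2]; exact Finset.mem_singleton_self _
  have hCj1X : C j₁ ⊆ X := (Finset.mem_filter.mp hj1A).2
  have hCj2 := (Finset.mem_filter.mp hj2B).2
  have hCj1card : (C j₁).card = p := by rw [hj1] at hsAp; simpa using hsAp
  have hCj2card : (C j₂).card = 2 := by rw [hj2] at hsB2; simpa using hsB2
  have hC1 : C j₁ = X := Finset.eq_of_subset_of_card_le hCj1X (by omega)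
  have hC2 : C j₂ = Y := Finset.eq_of_subset_of_card_le hCj2.2 (by omega)
  refine ⟨j₁, j₂, ?_, hC1, hC2, ?_⟩
  · rintro rfl
    exact hCj2.1 hCj1X
  · intro j hne1 hne2
    have hjA : j ∉ A := by rw [hj1]; simpa using hne1
    have hjB : j ∉ B := by rw [hj2]; simpa using hne2
    rw [hAdef, Finset.mem_filter] at hjA
    rw [hBdef, Finset.mem_filter] at hjB
    push_neg at hjA hjB
    have hx : ¬ (C j ⊆ X) := hjA (Finset.mem_univ j)
    exact hclass j hx (hjB (Finset.mem_univ j) hx)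
end

section
/- Let d ≥ 2, let A ∈ ℝ^{d×d} be symmetric positive definite and let C ∈ ℝ^{d×d} be symmetric positive semi-definite. Then det(A + C) ≥ (1 + tr(A^{-1}C))·det A + det C. -/
/-!
With `S = √A`, the matrix `A⁻¹C = S⁻¹(S⁻¹CS⁻¹)S` is similar to the positive semidefinite
`M = S⁻¹CS⁻¹`, and `det (A + C) = det A · det (1 + A⁻¹C)`. It therefore suffices that
`1 + tr M + det M ≤ det (1 + M)`. In the eigenvalues `λᵢ ≥ 0` of `M` this says that the expansion
of `∏ (1 + λᵢ)` contains the terms `1`, `∑ λᵢ` and `∏ λᵢ`, which are distinct once `d ≥ 2`.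
-/

open Matrix
open scoped ComplexOrder

theorem Finset.one_add_sum_le_prod_one_add {ι R : Type*} [CommRing R] [LinearOrder R]
    [IsStrictOrderedRing R] (s : Finset ι) {f : ι → R} (hf : ∀ i ∈ s, 0 ≤ f i) :
    1 + ∑ i ∈ s, f i ≤ ∏ i ∈ s, (1 + f i) := by
  classical
  induction s using Finset.induction_on with
  | empty => simp
  | insert a s ha ih =>
    have hfa := hf a (mem_insert_self a s)
    have ih := ih fun i hi => hf i (mem_insert_of_mem hi)
    have hsum := sum_nonneg fun i hi => hf i (mem_insert_of_mem hi)
    rw [sum_insert ha, prod_insert ha]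
    nlinarith

theorem Finset.one_add_sum_add_prod_le_prod_one_add {ι R : Type*} [CommRing R] [LinearOrder R]
    [IsStrictOrderedRing R] [DecidableEq ι] {s : Finset ι} {i j : ι} (hi : i ∈ s) (hj : j ∈ s)
    (hij : i ≠ j) {f : ι → R} (hf : ∀ k ∈ s, 0 ≤ f k) :
    1 + ∑ k ∈ s, f k + ∏ k ∈ s, f k ≤ ∏ k ∈ s, (1 + f k) := by
  have hj' : j ∈ s.erase i := mem_erase.mpr ⟨hij.symm, hj⟩
  set t := (s.erase i).erase j
  have hft : ∀ k ∈ t, 0 ≤ f k := fun k hk => hf k (mem_of_mem_erase (mem_of_mem_erase hk))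
  have hsum : 1 + ∑ k ∈ t, f k ≤ ∏ k ∈ t, (1 + f k) := one_add_sum_le_prod_one_add t hft
  have hprod : ∏ k ∈ t, f k ≤ ∏ k ∈ t, (1 + f k) :=
    prod_le_prod hft fun k _ => le_add_of_nonneg_left zero_le_one
  have hsum_nonneg := sum_nonneg hft
  have hfi := hf i hi
  have hfj := hf j hj
  rw [← add_sum_erase s f hi, ← add_sum_erase _ f hj', ← mul_prod_erase s f hi,
    ← mul_prod_erase _ f hj', ← mul_prod_erase s _ hi, ← mul_prod_erase _ _ hj']
  -- `(1 + fᵢ)(1 + fⱼ)R ≥ R + fᵢ + fⱼ + fᵢfⱼR` for `R = ∏ₜ (1 + f) ≥ 1 + ∑ₜ f, ∏ₜ f`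
  nlinarith [mul_nonneg hfi hfj, mul_le_mul_of_nonneg_left hprod (mul_nonneg hfi hfj)]

namespace Matrix

variable {n R : Type*} [Fintype n] [DecidableEq n] [CommRing R] [StarRing R]

theorem det_conjStarAlgAut (u : unitary (Matrix n n R)) (X : Matrix n n R) :
    (Unitary.conjStarAlgAut R _ u X).det = X.det := by
  rw [Unitary.conjStarAlgAut_apply, det_mul, det_mul, mul_right_comm, ← det_mul,
    Unitary.mul_star_self_of_mem u.2, det_one, one_mul]

theorem PosSemidef.one_add_trace_add_det_le_det_one_add {𝕜 : Type*} [RCLike 𝕜] [Nontrivial n]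
    {M : Matrix n n 𝕜} (hM : M.PosSemidef) : 1 + M.trace + M.det ≤ (1 + M).det := by
  obtain ⟨i, j, hij⟩ := exists_pair_ne n
  have hdet_one_add : (1 + M).det = ∏ k, (1 + (hM.1.eigenvalues k : 𝕜)) := by
    conv_lhs => rw [hM.1.spectral_theorem, ← map_one (Unitary.conjStarAlgAut 𝕜 _ _), ← map_add,
      det_conjStarAlgAut, ← diagonal_one, diagonal_add, det_diagonal]
    rfl
  rw [hdet_one_add, hM.1.trace_eq_sum_eigenvalues, hM.1.det_eq_prod_eigenvalues]
  exact_mod_cast Finset.one_add_sum_add_prod_le_prod_one_add (Finset.mem_univ i)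
    (Finset.mem_univ j) hij fun k _ => hM.eigenvalues_nonneg k

theorem PosDef.exists_inv_mul_eq_conj_posSemidef {𝕜 : Type*} [RCLike 𝕜] {A C : Matrix n n 𝕜}
    (hA : A.PosDef) (hC : C.PosSemidef) :
    ∃ S M : Matrix n n 𝕜, IsUnit S ∧ M.PosSemidef ∧ A⁻¹ * C = S⁻¹ * M * S := by
  open scoped MatrixOrder in
  obtain ⟨hS_pos, hSS⟩ : IsStrictlyPositive (CFC.sqrt A) ∧ CFC.sqrt A * CFC.sqrt A = A :=
    ⟨hA.isStrictlyPositive.sqrt, CFC.sqrt_mul_sqrt_self A hA.posSemidef.nonneg⟩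
  set S := CFC.sqrt A
  have hS : IsUnit S := hS_pos.isUnit
  have hS_inv_herm : (S⁻¹)ᴴ = S⁻¹ := hS_pos.posDef.isHermitian.inv.eq
  refine ⟨S, S⁻¹ * C * S⁻¹, hS,
    by simpa only [hS_inv_herm] using hC.conjTranspose_mul_mul_same S⁻¹, ?_⟩
  rw [← hSS, Matrix.mul_inv_rev]
  simp only [Matrix.mul_assoc, nonsing_inv_mul _ ((isUnit_iff_isUnit_det S).mp hS), Matrix.mul_one]

theorem PosDef.one_add_trace_add_det_inv_mul_le {𝕜 : Type*} [RCLike 𝕜] [Nontrivial n]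
    {A C : Matrix n n 𝕜} (hA : A.PosDef) (hC : C.PosSemidef) :
    1 + (A⁻¹ * C).trace + (A⁻¹ * C).det ≤ (1 + A⁻¹ * C).det := by
  obtain ⟨S, M, hS, hM, hAC⟩ := hA.exists_inv_mul_eq_conj_posSemidef hC
  have hconj : 1 + S⁻¹ * M * S = S⁻¹ * (1 + M) * S := by
    rw [Matrix.mul_add, Matrix.add_mul, Matrix.mul_one,
      nonsing_inv_mul _ ((isUnit_iff_isUnit_det S).mp hS)]
  rw [hAC, hconj, trace_conj' hS, det_conj' hS, det_conj' hS]
  exact hM.one_add_trace_add_det_le_det_one_add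

end Matrix

/-- Lemma A.1(a) of the paper.  For `d ≥ 2`, a positive definite `A`
and a positive semi-definite `C`: `det(A + C) ≥ (1 + tr(A⁻¹C))·det A + det C`. -/
theorem det_add_ge_trace_bound {d : ℕ} (hd : 2 ≤ d) (A C : Matrix (Fin d) (Fin d) ℝ)
    (hA : A.PosDef) (hC : C.PosSemidef) :
    (1 + (A⁻¹ * C).trace) * A.det + C.det ≤ (A + C).det := by
  have : Nontrivial (Fin d) := Fin.nontrivial_iff_two_le.mpr hd
  have hA_det : IsUnit A.det := (isUnit_iff_isUnit_det A).mp hA.isUnit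
  have hdet_add : (A + C).det = A.det * (1 + A⁻¹ * C).det := by
    rw [← det_mul, Matrix.mul_add, Matrix.mul_one, mul_nonsing_inv_cancel_left _ _ hA_det]
  have hdet_C : C.det = A.det * (A⁻¹ * C).det := by
    rw [← det_mul, mul_nonsing_inv_cancel_left _ _ hA_det]
  rw [hdet_add, hdet_C]
  linear_combination
    mul_le_mul_of_nonneg_left (hA.one_add_trace_add_det_inv_mul_le hC) hA.det_pos.le
end

section
/- Let g ≥ 2 and c ≥ 2 be real (c real, g a natural number). The minimum of Σ_{1≤j<l≤g} a_j a_l over all g-tuples (a_1,…,a_g) of real numbers with a_1 ≥ 1, a_2 ≥ 1, a_3,…,a_g ≥ 0 and Σ_{j=1}^g a_j = c equals c − 1, and it is attained exactly at the two tuples (1, c−1, 0, …, 0) and (c−1, 1, 0, …, 0). -/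
/-!
Write a feasible tuple as `(x, y, b)` with `b` the tail. Splitting off the first two entries
gives `∑_{j<l} a_j a_l = x y + (x + y) ∑ b + ∑_{j<l} b_j b_l`, and with `c = x + y + ∑ b` this
turns into
`∑_{j<l} a_j a_l - (c - 1) = (x - 1)(y - 1) + (x + y - 1) ∑ b + ∑_{j<l} b_j b_l`.
All three terms are nonnegative, and since `x + y - 1 > 0` they vanish together exactly when
`x = 1` or `y = 1` and `b = 0`.
-/

open Finset

def pairwiseProductSum {R : Type*} [Mul R] [AddCommMonoid R] {n : ℕ} (a : Fin n → R) : R :=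
  ∑ j, ∑ l ∈ univ.filter (fun l => j < l), a j * a l

section

variable {R : Type*} {n : ℕ}

theorem pairwiseProductSum_zero [NonUnitalNonAssocSemiring R] :
    pairwiseProductSum (0 : Fin n → R) = 0 := by
  simp [pairwiseProductSum]

theorem pairwiseProductSum_cons [NonUnitalNonAssocSemiring R] (x : R) (b : Fin n → R) :
    pairwiseProductSum (Fin.cons x b : Fin (n + 1) → R) = x * ∑ i, b i + pairwiseProductSum b := by
  simp only [pairwiseProductSum, sum_filter, Fin.sum_univ_succ, Fin.succ_pos,
    Fin.succ_lt_succ_iff, Fin.not_lt_zero, if_true, if_false, zero_add, mul_sum, Fin.cons_zero,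
    Fin.cons_succ]

theorem pairwiseProductSum_cons_cons [CommSemiring R] (x y : R) (b : Fin n → R) :
    pairwiseProductSum (Fin.cons x (Fin.cons y b) : Fin (n + 2) → R) =
      x * y + (x + y) * ∑ i, b i + pairwiseProductSum b := by
  rw [pairwiseProductSum_cons, Fin.sum_cons, pairwiseProductSum_cons]
  ring

theorem pairwiseProductSum_nonneg [Semiring R] [PartialOrder R] [IsOrderedRing R]
    {b : Fin n → R} (hb : 0 ≤ b) : 0 ≤ pairwiseProductSum b :=
  sum_nonneg fun _ _ => sum_nonneg fun _ _ => mul_nonneg (hb _) (hb _)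

theorem pairwiseProductSum_cons_cons_sub [CommRing R] (x y : R) (b : Fin n → R) :
    pairwiseProductSum (Fin.cons x (Fin.cons y b) : Fin (n + 2) → R) - (x + y + ∑ i, b i - 1) =
      (x - 1) * (y - 1) + (x + y - 1) * ∑ i, b i + pairwiseProductSum b := by
  rw [pairwiseProductSum_cons_cons]
  ring

variable [CommRing R] [LinearOrder R] [IsStrictOrderedRing R] {x y : R} {b : Fin n → R}

theorem sum_sub_one_le_pairwiseProductSum (hx : 1 ≤ x) (hy : 1 ≤ y) (hb : 0 ≤ b) :
    x + y + ∑ i, b i - 1 ≤ pairwiseProductSum (Fin.cons x (Fin.cons y b) : Fin (n + 2) → R) := by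
  rw [← sub_nonneg, pairwiseProductSum_cons_cons_sub]
  have := Fintype.sum_nonneg hb
  have := pairwiseProductSum_nonneg hb
  have : 0 ≤ (x - 1) * (y - 1) := mul_nonneg (sub_nonneg.2 hx) (sub_nonneg.2 hy)
  have : 0 ≤ (x + y - 1) * ∑ i, b i := mul_nonneg (by linarith) (by linarith)
  linarith

theorem pairwiseProductSum_eq_sum_sub_one_iff (hx : 1 ≤ x) (hy : 1 ≤ y) (hb : 0 ≤ b) :
    pairwiseProductSum (Fin.cons x (Fin.cons y b) : Fin (n + 2) → R) = x + y + ∑ i, b i - 1 ↔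
      (x = 1 ∨ y = 1) ∧ b = 0 := by
  have hxy : 0 < x + y - 1 := by linarith
  have h₁ : 0 ≤ (x - 1) * (y - 1) := mul_nonneg (sub_nonneg.2 hx) (sub_nonneg.2 hy)
  have h₂ : 0 ≤ (x + y - 1) * ∑ i, b i := mul_nonneg hxy.le (Fintype.sum_nonneg hb)
  rw [← sub_eq_zero, pairwiseProductSum_cons_cons_sub,
    add_eq_zero_iff_of_nonneg (add_nonneg h₁ h₂) (pairwiseProductSum_nonneg hb),
    add_eq_zero_iff_of_nonneg h₁ h₂, mul_eq_zero, mul_eq_zero, sub_eq_zero, sub_eq_zero,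
    Fintype.sum_eq_zero_iff_of_nonneg hb]
  simp only [hxy.ne', false_or, and_iff_left_iff_imp]
  rintro ⟨-, rfl⟩
  exact pairwiseProductSum_zero

end

theorem Fin.forall_two_le_val_iff {n : ℕ} {P : Fin (n + 2) → Prop} :
    (∀ j : Fin (n + 2), 2 ≤ (j : ℕ) → P j) ↔ ∀ i : Fin n, P i.succ.succ := by
  simp [Fin.forall_fin_succ]

theorem Fin.ite_val_eq_cons_cons {R : Type*} [Zero R] {n : ℕ} (p q : R) :
    (fun j : Fin (n + 2) => if (j : ℕ) = 0 then p else if (j : ℕ) = 1 then q else 0) =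
      Fin.cons p (Fin.cons q 0) := by
  funext j
  refine Fin.cases ?_ (Fin.cases ?_ fun i => ?_) j <;> simp

/-- Lemma A.4 of the paper.  Let `g ≥ 2` and `c ≥ 2`.  The minimum of
`Σ_{j<l} a_j a_l` over all `g`-tuples of reals with `a_1, a_2 ≥ 1`, `a_3,…,a_g ≥ 0` and
`Σ_j a_j = c` equals `c − 1`, and it is attained exactly at the two tuples
`(1, c−1, 0, …, 0)` and `(c−1, 1, 0, …, 0)`. -/
theorem min_sum_pairwise_products {g : ℕ} (hg : 2 ≤ g) (c : ℝ) (hc : 2 ≤ c) :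
    IsLeast {s : ℝ | ∃ a : Fin g → ℝ,
        (1 ≤ a ⟨0, by omega⟩ ∧ 1 ≤ a ⟨1, by omega⟩ ∧
          (∀ j : Fin g, 2 ≤ (j : ℕ) → 0 ≤ a j) ∧ ∑ j, a j = c) ∧
        s = ∑ j, ∑ l ∈ Finset.univ.filter (fun l => j < l), a j * a l}
      (c - 1) ∧
    ∀ a : Fin g → ℝ,
      (1 ≤ a ⟨0, by omega⟩ ∧ 1 ≤ a ⟨1, by omega⟩ ∧
        (∀ j : Fin g, 2 ≤ (j : ℕ) → 0 ≤ a j) ∧ ∑ j, a j = c) →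
      ((∑ j, ∑ l ∈ Finset.univ.filter (fun l => j < l), a j * a l) = c - 1 ↔
        (a = fun j : Fin g => if (j : ℕ) = 0 then 1 else if (j : ℕ) = 1 then c - 1 else 0) ∨
        (a = fun j : Fin g => if (j : ℕ) = 0 then c - 1 else if (j : ℕ) = 1 then 1 else 0)) := by
  obtain ⟨n, rfl⟩ : ∃ n, g = n + 2 := ⟨g - 2, by omega⟩
  simp only [Fin.zero_eta, Fin.mk_one, Fin.forall_two_le_val_iff, Fin.ite_val_eq_cons_cons,
    Fin.forall_fin_succ_pi, Fin.exists_fin_succ_pi, Fin.cons_zero, Fin.cons_one, Fin.cons_succ,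
    Fin.sum_cons, Fin.cons_inj, ← pairwiseProductSum.eq_1]
  refine ⟨⟨⟨1, c - 1, 0, ⟨le_rfl, by linarith, fun _ => le_rfl, by simp⟩, ?_⟩, ?_⟩, ?_⟩
  · simp [pairwiseProductSum_cons_cons, pairwiseProductSum_zero]
  · rintro s ⟨x, y, b, ⟨hx, hy, hb, rfl⟩, rfl⟩
    simpa only [add_assoc] using sum_sub_one_le_pairwiseProductSum hx hy hb
  · rintro x y b ⟨hx, hy, hb, rfl⟩
    rw [← add_assoc, pairwiseProductSum_eq_sum_sub_one_iff hx hy hb]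
    constructor
    · rintro ⟨rfl | rfl, rfl⟩ <;> simp
    · rintro (⟨rfl, -, rfl⟩ | ⟨-, rfl, rfl⟩) <;> simp
end
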